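/- arXiv:1809.07370 — 5 statements merged into one kernel-verified Lean document; each statement's English description precedes it below -/
import Mathlib

section
/- Let $\sigma_1, \sigma_2, \sigma_3$ be positive integers with $\sigma_3 \geq 2$ (ensuring convergence). Then $\sum_{n_1,n_2 \geq 1} \frac{1}{n_1^{\sigma_1} n_2^{\sigma_2} (n_1+n_2)^{\sigma_3}} = \sum_{\substack{r+s = \sigma_1+\sigma_2 \\ r,s \geq 1}} \left( \binom{\sigma_1-1}{r-1} + \binom{\sigma_2-1}{r-1} \right) \zeta(s, r+\sigma_3)$, where $\zeta(s_1,s_2) = \sum_{0 < n < m} \frac{1}{n^{s_1} m^{s_2}}$ is the double zeta value. -/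
/-- The double zeta value `ζ(a, b) = ∑_{0 < n < m} n⁻ᵃ m⁻ᵇ`, parametrized by `n = p.1`,
`m = p.1 + p.2` for pairs of positive integers. -/
noncomputable def doubleZeta (a b : ℕ) : ℝ :=
  ∑' p : ℕ+ × ℕ+, 1 / (((p.1 : ℕ) : ℝ) ^ a * (((p.1 : ℕ) : ℝ) + ((p.2 : ℕ) : ℝ)) ^ b)

/-!
With `u = 1/x`, `v = 1/y`, `w = 1/(x+y)` one has `u v = w (u + v)`. Iterating this relation
expands `u^σ₁ v^σ₂` into terms `u^s w^r` and `v^s w^r` with `r + s = σ₁ + σ₂`, whose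
coefficients obey Pascal's rule and hence are binomial coefficients. After multiplying by
`w^σ₃` and summing over `(x, y)`, each term becomes a double zeta value (the `v`-terms after
exchanging `x` and `y`).
-/

open Finset

section PartialFractions

variable {R : Type*} [CommSemiring R]

def partialFractionSum (u w : R) (a b : ℕ) : R :=
  ∑ r ∈ range (a + b + 1), (r.choose b : R) * u ^ (a + b + 1 - r) * w ^ (r + 1)

lemma partialFractionSum_zero_left (u w : R) (b : ℕ) :
    partialFractionSum u w 0 b = u * w ^ (b + 1) := by
  rw [partialFractionSum, zero_add, sum_range_succ,
    sum_eq_zero fun r hr => by rw [Nat.choose_eq_zero_of_lt (mem_range.1 hr)]; simp]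
  simp

lemma partialFractionSum_succ_zero (u w : R) (a : ℕ) :
    partialFractionSum u w (a + 1) 0 = u * (partialFractionSum u w a 0 + w ^ (a + 2)) := by
  simp only [partialFractionSum, add_zero, Nat.choose_zero_right, Nat.cast_one, one_mul]
  rw [sum_range_succ, mul_add, mul_sum, Nat.add_sub_cancel_left, pow_one, mul_comm u]
  congr 1
  refine sum_congr rfl fun r hr => ?_
  rw [show a + 1 + 1 - r = a + 1 - r + 1 by have := mem_range.1 hr; omega, pow_succ]
  ring

lemma partialFractionSum_succ_succ (u w : R) (a b : ℕ) :
    partialFractionSum u w (a + 1) (b + 1) =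
      w * (partialFractionSum u w a (b + 1) + partialFractionSum u w (a + 1) b) := by
  simp only [partialFractionSum, show a + 1 + b = a + (b + 1) by ring,
    show a + 1 + (b + 1) = a + (b + 1) + 1 by ring]
  rw [sum_range_succ', Nat.choose_zero_succ, Nat.cast_zero, zero_mul, zero_mul, add_zero,
    ← sum_add_distrib, mul_sum]
  refine sum_congr rfl fun r _ => ?_
  rw [Nat.choose_succ_succ', Nat.add_sub_add_right, Nat.cast_add]
  ring

end PartialFractions

section PartialFractionExpansion

variable {R : Type*} [CommRing R] {u v w : R}

lemma pow_succ_mul_eq_partialFractionSum (h : u * v = w * (u + v)) (a : ℕ) :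
    u ^ (a + 1) * v = partialFractionSum u w a 0 + partialFractionSum v w 0 a := by
  induction a with
  | zero => simp only [partialFractionSum_zero_left]; linear_combination h
  | succ a ih =>
    rw [partialFractionSum_succ_zero, partialFractionSum_zero_left] at *
    linear_combination u * ih + w ^ (a + 1) * h

theorem pow_succ_mul_pow_succ_eq_partialFractionSum (h : u * v = w * (u + v)) (a b : ℕ) :
    u ^ (a + 1) * v ^ (b + 1) = partialFractionSum u w a b + partialFractionSum v w b a := by
  induction a generalizing b with
  | zero =>
    linear_combination pow_succ_mul_eq_partialFractionSum
      (show v * u = w * (v + u) by linear_combination h) b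
  | succ a ih =>
    induction b with
    | zero => simpa using pow_succ_mul_eq_partialFractionSum h (a + 1)
    | succ b ihb =>
      rw [partialFractionSum_succ_succ, partialFractionSum_succ_succ]
      linear_combination u ^ (a + 1) * v ^ (b + 1) * h + w * ih (b + 1) + w * ihb

end PartialFractionExpansion

lemma one_div_pow_mul_pow_mul_pow_eq_partialFractionSum {K : Type*} [Field K] {x y : K}
    (hx : x ≠ 0) (hy : y ≠ 0) (hxy : x + y ≠ 0) (a b c : ℕ) :
    1 / (x ^ (a + 1) * y ^ (b + 1) * (x + y) ^ c) =
      partialFractionSum x⁻¹ (x + y)⁻¹ a b * (x + y)⁻¹ ^ c +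
        partialFractionSum y⁻¹ (x + y)⁻¹ b a * (x + y)⁻¹ ^ c := by
  rw [← add_mul, ← pow_succ_mul_pow_succ_eq_partialFractionSum (by field_simp; ring), one_div,
    mul_inv, mul_inv, inv_pow, inv_pow, inv_pow]

lemma rpow_three_halves_mul_le {x y : ℝ} (hx : 0 ≤ x) (hy : 0 ≤ y) :
    x ^ (3 / 2 : ℝ) * y ^ (3 / 2 : ℝ) ≤ x * (x + y) ^ 2 := by
  have hxy : 0 ≤ x + y := add_nonneg hx hy
  calc x ^ (3 / 2 : ℝ) * y ^ (3 / 2 : ℝ) = x * (x ^ (1 / 2 : ℝ) * y ^ (3 / 2 : ℝ)) := by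
        rw [← mul_assoc, ← Real.rpow_one_add' hx (by norm_num)]; norm_num
    _ ≤ x * ((x + y) ^ (1 / 2 : ℝ) * (x + y) ^ (3 / 2 : ℝ)) := by
        gcongr <;> linarith
    _ = x * (x + y) ^ 2 := by
        rw [← Real.rpow_add' hxy (by norm_num)]; norm_num

lemma hasSum_doubleZeta {a b : ℕ} (ha : 1 ≤ a) (hb : 2 ≤ b) :
    HasSum (fun p : ℕ+ × ℕ+ => ((p.1 : ℕ) : ℝ)⁻¹ ^ a * (((p.1 : ℕ) : ℝ) + ((p.2 : ℕ) : ℝ))⁻¹ ^ b)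
      (doubleZeta a b) := by
  have hp : Summable fun n : ℕ+ => (((n : ℕ) : ℝ) ^ (3 / 2 : ℝ))⁻¹ :=
    (Real.summable_nat_rpow_inv.2 (by norm_num)).comp_injective PNat.coe_injective
  have bound (p : ℕ+ × ℕ+) :
      ((p.1 : ℕ) : ℝ)⁻¹ ^ a * (((p.1 : ℕ) : ℝ) + ((p.2 : ℕ) : ℝ))⁻¹ ^ b ≤
        (((p.1 : ℕ) : ℝ) ^ (3 / 2 : ℝ))⁻¹ * (((p.2 : ℕ) : ℝ) ^ (3 / 2 : ℝ))⁻¹ := by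
    have hx : (1 : ℝ) ≤ ((p.1 : ℕ) : ℝ) := Nat.one_le_cast.2 p.1.pos
    have hy : (1 : ℝ) ≤ ((p.2 : ℕ) : ℝ) := Nat.one_le_cast.2 p.2.pos
    rw [inv_pow, inv_pow, ← mul_inv, ← mul_inv]
    refine inv_anti₀ (by positivity) ?_
    calc _ ≤ ((p.1 : ℕ) : ℝ) * (((p.1 : ℕ) : ℝ) + ((p.2 : ℕ) : ℝ)) ^ 2 :=
          rpow_three_halves_mul_le (by positivity) (by positivity)
      _ ≤ _ := mul_le_mul (le_self_pow₀ hx (by omega)) (pow_le_pow_right₀ (by linarith) hb)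
          (by positivity) (by positivity)
  have hsum := Summable.of_nonneg_of_le (fun p => by positivity) bound
    (hp.mul_of_nonneg hp (fun _ => by positivity) (fun _ => by positivity))
  simpa only [doubleZeta, one_div, mul_inv, inv_pow] using hsum.hasSum

lemma hasSum_partialFractionSum_mul_pow (a b : ℕ) {c : ℕ} (hc : 1 ≤ c) :
    HasSum (fun p : ℕ+ × ℕ+ => partialFractionSum ((p.1 : ℕ) : ℝ)⁻¹
        (((p.1 : ℕ) : ℝ) + ((p.2 : ℕ) : ℝ))⁻¹ a b *
        (((p.1 : ℕ) : ℝ) + ((p.2 : ℕ) : ℝ))⁻¹ ^ c)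
      (∑ r ∈ range (a + b + 1), (r.choose b : ℝ) * doubleZeta (a + b + 1 - r) (r + 1 + c)) := by
  simp only [partialFractionSum, sum_mul, mul_assoc, ← pow_add]
  refine hasSum_sum fun r hr => (hasSum_doubleZeta ?_ (by omega)).mul_left _
  have := mem_range.1 hr
  omega

lemma hasSum_mordellTornheim (a b : ℕ) {c : ℕ} (hc : 1 ≤ c) :
    HasSum (fun p : ℕ+ × ℕ+ => 1 / (((p.1 : ℕ) : ℝ) ^ (a + 1) * ((p.2 : ℕ) : ℝ) ^ (b + 1) *
        (((p.1 : ℕ) : ℝ) + ((p.2 : ℕ) : ℝ)) ^ c))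
      (∑ r ∈ range (a + b + 1),
        ((r.choose b : ℝ) + r.choose a) * doubleZeta (a + b + 1 - r) (r + 1 + c)) := by
  have hy : HasSum (fun p : ℕ+ × ℕ+ => partialFractionSum ((p.2 : ℕ) : ℝ)⁻¹
        (((p.1 : ℕ) : ℝ) + ((p.2 : ℕ) : ℝ))⁻¹ b a *
        (((p.1 : ℕ) : ℝ) + ((p.2 : ℕ) : ℝ))⁻¹ ^ c)
      (∑ r ∈ range (a + b + 1), (r.choose a : ℝ) * doubleZeta (a + b + 1 - r) (r + 1 + c)) := by
    rw [add_comm a b]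
    convert (Equiv.prodComm ℕ+ ℕ+).hasSum_iff.2 (hasSum_partialFractionSum_mul_pow b a hc)
      using 2 with p
    simp [add_comm]
  simp only [add_mul, sum_add_distrib]
  convert (hasSum_partialFractionSum_mul_pow a b hc).add hy using 1
  exact funext fun p => one_div_pow_mul_pow_mul_pow_eq_partialFractionSum (by positivity)
    (by positivity) (by positivity) a b c

/-- Example 4.4: the Mordell–Tornheim double sum `T(σ₁, σ₂; σ₃)` equals
`∑_{r+s=σ₁+σ₂, r,s≥1} (C(r-1,σ₁-1) + C(r-1,σ₂-1)) ζ(s, r+σ₃)`. -/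
theorem mordellTornheim_eq_doubleZeta_comb (σ₁ σ₂ σ₃ : ℕ)
    (h1 : 1 ≤ σ₁) (h2 : 1 ≤ σ₂) (h3 : 2 ≤ σ₃) :
    (∑' n : ℕ+ × ℕ+,
        1 / (((n.1 : ℕ) : ℝ) ^ σ₁ * ((n.2 : ℕ) : ℝ) ^ σ₂ *
              (((n.1 : ℕ) : ℝ) + ((n.2 : ℕ) : ℝ)) ^ σ₃)) =
      ∑ r ∈ Finset.Icc 1 (σ₁ + σ₂ - 1),
        ((Nat.choose (r - 1) (σ₁ - 1) : ℝ) + (Nat.choose (r - 1) (σ₂ - 1) : ℝ)) *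
          doubleZeta (σ₁ + σ₂ - r) (r + σ₃) := by
  obtain ⟨a, rfl⟩ : ∃ a, σ₁ = a + 1 := ⟨σ₁ - 1, by omega⟩
  obtain ⟨b, rfl⟩ : ∃ b, σ₂ = b + 1 := ⟨σ₂ - 1, by omega⟩
  rw [(hasSum_mordellTornheim a b (by omega)).tsum_eq,
    show Icc 1 (a + 1 + (b + 1) - 1) = (range (a + b + 1)).map (addRightEmbedding 1) by
      rw [range_eq_Ico, map_add_right_Ico]; ext; simp; omega, sum_map]
  refine sum_congr rfl fun r _ => ?_
  rw [addRightEmbedding_apply, show a + 1 + (b + 1) - (r + 1) = a + b + 1 - r by omega]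
  simp only [Nat.add_sub_cancel]
  ring
end

section
/- Let $\sigma_1,\sigma_2,\sigma_3,\mu_1,\sigma_4$ be positive integers with the triple sum convergent (e.g. $\sigma_4 \geq 2$). Then the Mordell–Tornheim-type triple sum $\sum_{n_1,n_2,n_3 \geq 1} \frac{1}{n_1^{\sigma_1} n_2^{\sigma_2} (n_1+n_2)^{\mu_1} n_3^{\sigma_3} (n_1+n_2+n_3)^{\sigma_4}}$ is a finite $\mathbb{Z}$-linear combination (with explicit binomial coefficients) of triple zeta values $\zeta(t_1, t_2, t_3) = \sum_{0<k_1<k_2<k_3} k_1^{-t_1} k_2^{-t_2} k_3^{-t_3}$ of weight $t_1+t_2+t_3 = \sigma_1+\sigma_2+\sigma_3+\mu_1+\sigma_4$. -/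
/-- The triple zeta value `ζ(a, b, c) = ∑_{0 < k₁ < k₂ < k₃} k₁⁻ᵃ k₂⁻ᵇ k₃⁻ᶜ`,
parametrized by `k₁ = p.1`, `k₂ = p.1 + p.2.1`, `k₃ = p.1 + p.2.1 + p.2.2`. -/
noncomputable def tripleZeta (a b c : ℕ) : ℝ :=
  ∑' p : ℕ+ × ℕ+ × ℕ+,
    1 / (((p.1 : ℕ) : ℝ) ^ a * (((p.1 : ℕ) : ℝ) + ((p.2.1 : ℕ) : ℝ)) ^ b *
          (((p.1 : ℕ) : ℝ) + ((p.2.1 : ℕ) : ℝ) + ((p.2.2 : ℕ) : ℝ)) ^ c)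


lemma mul_term (c u v : ℝ) (hu : u ≠ 0) (hv : v ≠ 0) (e : ℕ) :
    1/v * (c/(u * v^e)) = c/(u * v^(e+1)) := by
  rw [div_mul_div_comm, one_mul]
  congr 1
  ring

lemma pf_aux (n : ℕ) : ∀ a b : ℕ, a + b = n → 1 ≤ n → ∃ A B : ℕ → ℤ,
    ∀ x y : ℝ, 0 < x → 0 < y →
      1 / (x^a * y^b) =
        (∑ i ∈ Finset.Icc 1 a, ((A i : ℝ)) / (x^i * (x+y)^(a+b-i))) +
        (∑ i ∈ Finset.Icc 1 b, ((B i : ℝ)) / (y^i * (x+y)^(a+b-i))) := by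
  induction n using Nat.strong_induction_on with
  | _ n ih =>
    intro a b hab hn
    rcases Nat.eq_zero_or_pos b with hb | hb
    · subst hb
      have ha : 1 ≤ a := by omega
      refine ⟨fun i => if i = a then 1 else 0, 0, fun x y hx hy => ?_⟩
      simp only [apply_ite (Int.cast : ℤ → ℝ), Int.cast_one, Int.cast_zero, ite_div,
        zero_div, Finset.sum_ite_eq', Finset.mem_Icc, Pi.zero_apply, Finset.sum_const_zero]
      have : 1 ≤ a ∧ a ≤ a := ⟨ha, le_rfl⟩
      simp [this]
    rcases Nat.eq_zero_or_pos a with ha | ha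
    · subst ha
      refine ⟨0, fun i => if i = b then 1 else 0, fun x y hx hy => ?_⟩
      simp only [apply_ite (Int.cast : ℤ → ℝ), Int.cast_one, Int.cast_zero, ite_div,
        zero_div, Finset.sum_ite_eq', Finset.mem_Icc, Pi.zero_apply, Finset.sum_const_zero]
      have : 1 ≤ b ∧ b ≤ b := ⟨hb, le_rfl⟩
      simp [this]
    obtain ⟨a', rfl⟩ : ∃ a', a = a' + 1 := ⟨a - 1, by omega⟩
    obtain ⟨b', rfl⟩ : ∃ b', b = b' + 1 := ⟨b - 1, by omega⟩
    obtain ⟨A1, B1, h1⟩ := ih (n-1) (by omega) a' (b'+1) (by omega) (by omega)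
    obtain ⟨A2, B2, h2⟩ := ih (n-1) (by omega) (a'+1) b' (by omega) (by omega)
    refine ⟨fun i => (if i ≤ a' then A1 i else 0) + A2 i,
            fun i => B1 i + (if i ≤ b' then B2 i else 0), fun x y hx hy => ?_⟩
    have hxy : (0:ℝ) < x + y := by linarith
    have key : 1 / (x^(a'+1) * y^(b'+1)) =
        1/(x+y) * (1/(x^a' * y^(b'+1))) + 1/(x+y) * (1/(x^(a'+1) * y^b')) := by
      field_simp
      ring
    rw [key, h1 x y hx hy, h2 x y hx hy, mul_add, mul_add, Finset.mul_sum, Finset.mul_sum,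
      Finset.mul_sum, Finset.mul_sum]
    have e1 : ∀ i ∈ Finset.Icc 1 a',
        1/(x+y) * ((A1 i : ℝ) / (x^i * (x+y)^(a' + (b'+1) - i))) =
          (A1 i : ℝ) / (x^i * (x+y)^(a'+1+(b'+1)-i)) := by
      intro i hi
      rw [Finset.mem_Icc] at hi
      rw [mul_term _ _ _ (by positivity) (by positivity),
        show a' + (b'+1) - i + 1 = a'+1+(b'+1)-i by omega]
    have e2 : ∀ i ∈ Finset.Icc 1 (b'+1),
        1/(x+y) * ((B1 i : ℝ) / (y^i * (x+y)^(a' + (b'+1) - i))) =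
          (B1 i : ℝ) / (y^i * (x+y)^(a'+1+(b'+1)-i)) := by
      intro i hi
      rw [Finset.mem_Icc] at hi
      rw [mul_term _ _ _ (by positivity) (by positivity),
        show a' + (b'+1) - i + 1 = a'+1+(b'+1)-i by omega]
    have e3 : ∀ i ∈ Finset.Icc 1 (a'+1),
        1/(x+y) * ((A2 i : ℝ) / (x^i * (x+y)^(a'+1 + b' - i))) =
          (A2 i : ℝ) / (x^i * (x+y)^(a'+1+(b'+1)-i)) := by
      intro i hi
      rw [Finset.mem_Icc] at hi
      rw [mul_term _ _ _ (by positivity) (by positivity),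
        show a'+1+b' - i + 1 = a'+1+(b'+1)-i by omega]
    have e4 : ∀ i ∈ Finset.Icc 1 b',
        1/(x+y) * ((B2 i : ℝ) / (y^i * (x+y)^(a'+1 + b' - i))) =
          (B2 i : ℝ) / (y^i * (x+y)^(a'+1+(b'+1)-i)) := by
      intro i hi
      rw [Finset.mem_Icc] at hi
      rw [mul_term _ _ _ (by positivity) (by positivity),
        show a'+1+b' - i + 1 = a'+1+(b'+1)-i by omega]
    rw [Finset.sum_congr rfl e1, Finset.sum_congr rfl e2, Finset.sum_congr rfl e3,
      Finset.sum_congr rfl e4]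
    have s1 : (∑ i ∈ Finset.Icc 1 (a'+1),
          (if i ≤ a' then (A1 i : ℝ) else 0) / (x^i * (x+y)^(a'+1+(b'+1)-i))) =
        ∑ i ∈ Finset.Icc 1 a', (A1 i : ℝ) / (x^i * (x+y)^(a'+1+(b'+1)-i)) := by
      rw [← Finset.sum_subset (Finset.Icc_subset_Icc_right (Nat.le_succ a'))
        (by intro i hi hni
            rw [Finset.mem_Icc] at hi
            rw [Finset.mem_Icc] at hni
            have : ¬ i ≤ a' := by omega
            simp [this])]
      refine Finset.sum_congr rfl ?_
      intro i hi
      rw [Finset.mem_Icc] at hi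
      simp [hi.2]
    have s2 : (∑ i ∈ Finset.Icc 1 (b'+1),
          (if i ≤ b' then (B2 i : ℝ) else 0) / (y^i * (x+y)^(a'+1+(b'+1)-i))) =
        ∑ i ∈ Finset.Icc 1 b', (B2 i : ℝ) / (y^i * (x+y)^(a'+1+(b'+1)-i)) := by
      rw [← Finset.sum_subset (Finset.Icc_subset_Icc_right (Nat.le_succ b'))
        (by intro i hi hni
            rw [Finset.mem_Icc] at hi
            rw [Finset.mem_Icc] at hni
            have : ¬ i ≤ b' := by omega
            simp [this])]
      refine Finset.sum_congr rfl ?_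
      intro i hi
      rw [Finset.mem_Icc] at hi
      simp [hi.2]
    push_cast
    simp only [add_div, Finset.sum_add_distrib]
    rw [s1, s2]
    ring


abbrev P3 := ℕ+ × ℕ+ × ℕ+

noncomputable def TZfam (a b c : ℕ) : P3 → ℝ := fun p =>
  1 / (((p.1 : ℕ) : ℝ) ^ a * (((p.1 : ℕ) : ℝ) + ((p.2.1 : ℕ) : ℝ)) ^ b *
        (((p.1 : ℕ) : ℝ) + ((p.2.1 : ℕ) : ℝ) + ((p.2.2 : ℕ) : ℝ)) ^ c)

lemma pnat_cast_pos (n : ℕ+) : (0:ℝ) < ((n:ℕ):ℝ) := by exact_mod_cast n.pos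

lemma pnat_cast_one_le (n : ℕ+) : (1:ℝ) ≤ ((n:ℕ):ℝ) := by exact_mod_cast n.one_le

lemma summable_pnat_rpow : Summable (fun n : ℕ+ => ((n:ℕ):ℝ) ^ (-(4/3) : ℝ)) := by
  have h : Summable (fun n : ℕ => (n:ℝ) ^ (-(4/3) : ℝ)) :=
    Real.summable_nat_rpow.2 (by norm_num)
  exact h.comp_injective (fun a b hab => PNat.coe_injective hab)

lemma TZfam_nonneg (a b c : ℕ) (p : P3) : 0 ≤ TZfam a b c p := by
  unfold TZfam
  have := pnat_cast_pos p.1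
  have := pnat_cast_pos p.2.1
  have := pnat_cast_pos p.2.2
  positivity

set_option maxHeartbeats 1000000 in
lemma TZfam_summable {a b c : ℕ} (ha : 1 ≤ a) (hb : 1 ≤ b) (hc : 2 ≤ c) :
    Summable (TZfam a b c) := by
  have hgnn : ∀ n : ℕ+, 0 ≤ ((n:ℕ):ℝ) ^ (-(4/3) : ℝ) :=
    fun n => Real.rpow_nonneg (le_of_lt (pnat_cast_pos n)) _
  have h2 : Summable (fun q : ℕ+ × ℕ+ =>
      ((q.1:ℕ):ℝ) ^ (-(4/3) : ℝ) * ((q.2:ℕ):ℝ) ^ (-(4/3) : ℝ)) :=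
    summable_pnat_rpow.mul_of_nonneg summable_pnat_rpow hgnn hgnn
  have h3 : Summable (fun p : P3 => ((p.1:ℕ):ℝ) ^ (-(4/3) : ℝ) *
      (((p.2.1:ℕ):ℝ) ^ (-(4/3) : ℝ) * ((p.2.2:ℕ):ℝ) ^ (-(4/3) : ℝ))) :=
    summable_pnat_rpow.mul_of_nonneg h2 hgnn (fun q => mul_nonneg (hgnn _) (hgnn _))
  refine h3.of_nonneg_of_le (TZfam_nonneg a b c) ?_
  rintro ⟨n1, n2, n3⟩
  simp only [TZfam]
  set x : ℝ := ((n1:ℕ):ℝ) with hxdef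
  set y : ℝ := ((n2:ℕ):ℝ) with hydef
  set z : ℝ := ((n3:ℕ):ℝ) with hzdef
  have hx : 1 ≤ x := pnat_cast_one_le _
  have hy : 1 ≤ y := pnat_cast_one_le _
  have hz : 1 ≤ z := pnat_cast_one_le _
  have hx0 : (0:ℝ) < x := by linarith
  have hy0 : (0:ℝ) < y := by linarith
  have hz0 : (0:ℝ) < z := by linarith
  have hX0 : (0:ℝ) < x * (x+y) * (x+y+z)^2 := by positivity
  show 1 / (x ^ a * (x + y) ^ b * (x + y + z) ^ c) ≤
    x ^ (-(4/3) : ℝ) * (y ^ (-(4/3) : ℝ) * z ^ (-(4/3) : ℝ))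
  have step1 : 1 / (x ^ a * (x + y) ^ b * (x + y + z) ^ c) ≤
      1 / (x * (x+y) * (x+y+z)^2) := by
    apply one_div_le_one_div_of_le hX0
    have h1 : x^1 ≤ x^a := pow_le_pow_right₀ hx ha
    have h2 : (x+y)^1 ≤ (x+y)^b := pow_le_pow_right₀ (by linarith) hb
    have h3 : (x+y+z)^2 ≤ (x+y+z)^c := pow_le_pow_right₀ (by linarith) hc
    calc x * (x+y) * (x+y+z)^2 = x^1 * (x+y)^1 * (x+y+z)^2 := by ring
      _ ≤ x^a * (x+y)^b * (x+y+z)^c :=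
          mul_le_mul (mul_le_mul h1 h2 (by positivity) (by positivity)) h3
            (by positivity) (by positivity)
  have A1 : x*y^2 ≤ (x+y)^3 := by
    have h1 : y^2 ≤ (x+y)^2 := pow_le_pow_left₀ hy0.le (by linarith) 2
    calc x*y^2 ≤ (x+y)*(x+y)^2 :=
          mul_le_mul (by linarith) h1 (by positivity) (by positivity)
      _ = (x+y)^3 := by ring
  have A2 : y^2*z^4 ≤ (x+y+z)^6 := by
    have h1 : y^2 ≤ (x+y+z)^2 := pow_le_pow_left₀ hy0.le (by linarith) 2
    have h2 : z^4 ≤ (x+y+z)^4 := pow_le_pow_left₀ hz0.le (by linarith) 4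
    calc y^2*z^4 ≤ (x+y+z)^2*(x+y+z)^4 :=
          mul_le_mul h1 h2 (by positivity) (by positivity)
      _ = (x+y+z)^6 := by ring
  have step2 : (x*y*z)^(4:ℕ) ≤ (x * (x+y) * (x+y+z)^2)^(3:ℕ) := by
    calc (x*y*z)^(4:ℕ) = x^3*((x*y^2)*(y^2*z^4)) := by ring
      _ ≤ x^3*((x+y)^3*(x+y+z)^6) := by
          apply mul_le_mul_of_nonneg_left
            (mul_le_mul A1 A2 (by positivity) (by positivity)) (by positivity)
      _ = (x * (x+y) * (x+y+z)^2)^(3:ℕ) := by ring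
  have step3 : (x*y*z)^((4:ℝ)/3) ≤ x * (x+y) * (x+y+z)^2 := by
    have h := Real.rpow_le_rpow (by positivity) step2 (by norm_num : (0:ℝ) ≤ 1/3)
    rw [← Real.rpow_natCast (x*y*z) 4, ← Real.rpow_natCast (x*(x+y)*(x+y+z)^2) 3,
      ← Real.rpow_mul (by positivity), ← Real.rpow_mul hX0.le] at h
    norm_num at h
    exact h
  have step4 : 1 / (x * (x+y) * (x+y+z)^2) ≤ (x*y*z) ^ (-(4/3) : ℝ) := by
    rw [Real.rpow_neg (by positivity), one_div]
    exact inv_anti₀ (Real.rpow_pos_of_pos (by positivity) _) step3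
  have hsplit : (x*y*z) ^ (-(4/3) : ℝ) =
      x ^ (-(4/3) : ℝ) * (y ^ (-(4/3) : ℝ) * z ^ (-(4/3) : ℝ)) := by
    rw [show x*y*z = x*(y*z) by ring, Real.mul_rpow hx0.le (by positivity),
      Real.mul_rpow hy0.le hz0.le]
  exact step1.trans (step4.trans_eq hsplit)


lemma tripleZeta_eq_tsum_TZfam (a b c : ℕ) : tripleZeta a b c = ∑' p : P3, TZfam a b c p := rfl

def GenSet (W : ℕ) : Set (P3 → ℝ) :=
  {g | ∃ a b c : ℕ, 1 ≤ a ∧ 1 ≤ b ∧ 2 ≤ c ∧ a + b + c = W ∧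
    ∃ π : P3 ≃ P3, g = fun p => TZfam a b c (π p)}

lemma mem_span_of_eq_sum₂ {W : ℕ} {f : P3 → ℝ} {I J : Finset ℕ} {cA cB : ℕ → ℤ}
    {g h : ℕ → P3 → ℝ}
    (hg : ∀ i ∈ I, g i ∈ Submodule.span ℤ (GenSet W))
    (hh : ∀ j ∈ J, h j ∈ Submodule.span ℤ (GenSet W))
    (hf : ∀ p, f p = (∑ i ∈ I, (cA i : ℝ) * g i p) + (∑ j ∈ J, (cB j : ℝ) * h j p)) :
    f ∈ Submodule.span ℤ (GenSet W) := by
  have hfe : f = (∑ i ∈ I, cA i • g i) + (∑ j ∈ J, cB j • h j) := by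
    funext p
    rw [hf p]
    simp [Finset.sum_apply, Pi.add_apply, Pi.smul_apply, zsmul_eq_mul]
  rw [hfe]
  exact Submodule.add_mem _
    (Submodule.sum_mem _ fun i hi => Submodule.smul_mem _ (cA i) (hg i hi))
    (Submodule.sum_mem _ fun j hj => Submodule.smul_mem _ (cB j) (hh j hj))

lemma extract {W : ℕ} {f : P3 → ℝ} (hf : f ∈ Submodule.span ℤ (GenSet W)) :
    Summable f ∧ ∃ (T : Finset (ℕ × ℕ × ℕ)) (c : ℕ × ℕ × ℕ → ℤ),
      (∀ t ∈ T, 1 ≤ t.1 ∧ 1 ≤ t.2.1 ∧ 2 ≤ t.2.2 ∧ t.1 + t.2.1 + t.2.2 = W) ∧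
      (∑' p : P3, f p) = ∑ t ∈ T, (c t : ℝ) * tripleZeta t.1 t.2.1 t.2.2 := by
  induction hf using Submodule.span_induction with
  | mem g hgen =>
    obtain ⟨a, b, c, ha, hb, hc, hw, π, rfl⟩ := hgen
    have hsum : Summable (fun p => TZfam a b c (π p)) :=
      (π.summable_iff (f := TZfam a b c)).2 (TZfam_summable ha hb hc)
    refine ⟨hsum, {(a, b, c)}, fun _ => 1, ?_, ?_⟩
    · intro t ht
      rw [Finset.mem_singleton] at ht
      subst ht
      exact ⟨ha, hb, hc, hw⟩
    · rw [π.tsum_eq (TZfam a b c), Finset.sum_singleton]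
      rw [tripleZeta_eq_tsum_TZfam]
      simp
  | zero =>
    exact ⟨summable_zero, ∅, 0, by simp, by simp⟩
  | add g h _ _ ihg ihh =>
    obtain ⟨hsg, T₁, c₁, hT₁, he₁⟩ := ihg
    obtain ⟨hsh, T₂, c₂, hT₂, he₂⟩ := ihh
    refine ⟨hsg.add hsh, T₁ ∪ T₂,
      fun t => (if t ∈ T₁ then c₁ t else 0) + (if t ∈ T₂ then c₂ t else 0), ?_, ?_⟩
    · intro t ht
      rcases Finset.mem_union.1 ht with ht | ht
      · exact hT₁ t ht
      · exact hT₂ t ht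
    · have : (∑' p : P3, (g + h) p) = (∑' p : P3, g p) + (∑' p : P3, h p) := by
        simp only [Pi.add_apply]
        exact Summable.tsum_add hsg hsh
      rw [this, he₁, he₂]
      push_cast
      simp only [add_mul, Finset.sum_add_distrib]
      congr 1
      · rw [← Finset.sum_subset Finset.subset_union_left
          (by intro t _ hnt; simp [hnt])]
        refine Finset.sum_congr rfl fun t ht => by simp [ht]
      · rw [← Finset.sum_subset Finset.subset_union_right
          (by intro t _ hnt; simp [hnt])]
        refine Finset.sum_congr rfl fun t ht => by simp [ht]
  | smul z g _ ihg =>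
    obtain ⟨hsg, T, c, hT, he⟩ := ihg
    have hzg : (z • g) = fun p => (z:ℝ) * g p := by
      funext p
      simp [Pi.smul_apply, zsmul_eq_mul]
    refine ⟨by rw [hzg]; exact hsg.mul_left _, T, fun t => z * c t, hT, ?_⟩
    have : (∑' p : P3, (z • g) p) = (z:ℝ) * ∑' p : P3, g p := by
      rw [hzg]
      exact tsum_mul_left
    rw [this, he, Finset.mul_sum]
    push_cast
    simp [mul_assoc]

def pXZY : P3 ≃ P3 := ⟨fun p => (p.1, p.2.2, p.2.1), fun p => (p.1, p.2.2, p.2.1),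
  fun p => rfl, fun p => rfl⟩
def pZXY : P3 ≃ P3 := ⟨fun p => (p.2.2, p.1, p.2.1), fun p => (p.2.1, p.2.2, p.1),
  fun p => rfl, fun p => rfl⟩
def pYXZ : P3 ≃ P3 := ⟨fun p => (p.2.1, p.1, p.2.2), fun p => (p.2.1, p.1, p.2.2),
  fun p => rfl, fun p => rfl⟩
def pYZX : P3 ≃ P3 := ⟨fun p => (p.2.1, p.2.2, p.1), fun p => (p.2.2, p.1, p.2.1),
  fun p => rfl, fun p => rfl⟩
def pZYX : P3 ≃ P3 := ⟨fun p => (p.2.2, p.2.1, p.1), fun p => (p.2.2, p.2.1, p.1),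
  fun p => rfl, fun p => rfl⟩

lemma gen_mem {W a b c : ℕ} (ha : 1 ≤ a) (hb : 1 ≤ b) (hc : 2 ≤ c) (hw : a + b + c = W)
    (π : P3 ≃ P3) : (fun p => TZfam a b c (π p)) ∈ Submodule.span ℤ (GenSet W) :=
  Submodule.subset_span ⟨a, b, c, ha, hb, hc, hw, π, rfl⟩

lemma mem2 {i j m W : ℕ} (hi : 1 ≤ i) (hj : 1 ≤ j) (hm : 2 ≤ m) (hw : i + j + m = W) :
    (fun p : P3 => 1 / (((p.1:ℕ):ℝ)^i * ((p.2.2:ℕ):ℝ)^j *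
      (((p.1:ℕ):ℝ) + ((p.2.1:ℕ):ℝ) + ((p.2.2:ℕ):ℝ))^m)) ∈
      Submodule.span ℤ (GenSet W) := by
  obtain ⟨A, B, hAB⟩ := pf_aux (i + j) i j rfl (by omega)
  refine mem_span_of_eq_sum₂ (I := Finset.Icc 1 i) (J := Finset.Icc 1 j) (cA := A) (cB := B)
    (g := fun i' => fun p => TZfam i' (i + j - i') m (pXZY p))
    (h := fun j' => fun p => TZfam j' (i + j - j') m (pZXY p)) ?_ ?_ ?_
  · intro i' hi'
    rw [Finset.mem_Icc] at hi'
    exact gen_mem hi'.1 (by omega) hm (by omega) _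
  · intro j' hj'
    rw [Finset.mem_Icc] at hj'
    exact gen_mem hj'.1 (by omega) hm (by omega) _
  · rintro ⟨n1, n2, n3⟩
    have hpf := hAB _ _ (pnat_cast_pos n1) (pnat_cast_pos n3)
    simp only [TZfam, pXZY, pZXY, Equiv.coe_fn_mk]
    set x : ℝ := ((n1:ℕ):ℝ)
    set y : ℝ := ((n2:ℕ):ℝ)
    set z : ℝ := ((n3:ℕ):ℝ)
    rw [show z + x = x + z from by ring, show x + z + y = x + y + z from by ring]
    rw [show (1:ℝ)/(x^i * z^j * (x+y+z)^m) = (1/(x^i * z^j)) * (1/(x+y+z)^m) from by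
      rw [div_mul_div_comm, one_mul, mul_assoc]]
    rw [hpf, add_mul, Finset.sum_mul, Finset.sum_mul]
    congr 1
    · refine Finset.sum_congr rfl fun i' _ => ?_
      rw [div_mul_div_comm, mul_one, mul_one_div]
    · refine Finset.sum_congr rfl fun j' _ => ?_
      rw [div_mul_div_comm, mul_one, mul_one_div]

lemma mem2' {i j m W : ℕ} (hi : 1 ≤ i) (hj : 1 ≤ j) (hm : 2 ≤ m) (hw : i + j + m = W) :
    (fun p : P3 => 1 / (((p.2.1:ℕ):ℝ)^i * ((p.2.2:ℕ):ℝ)^j *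
      (((p.1:ℕ):ℝ) + ((p.2.1:ℕ):ℝ) + ((p.2.2:ℕ):ℝ))^m)) ∈
      Submodule.span ℤ (GenSet W) := by
  obtain ⟨A, B, hAB⟩ := pf_aux (i + j) i j rfl (by omega)
  refine mem_span_of_eq_sum₂ (I := Finset.Icc 1 i) (J := Finset.Icc 1 j) (cA := A) (cB := B)
    (g := fun i' => fun p => TZfam i' (i + j - i') m (pYZX p))
    (h := fun j' => fun p => TZfam j' (i + j - j') m (pZYX p)) ?_ ?_ ?_
  · intro i' hi'
    rw [Finset.mem_Icc] at hi'
    exact gen_mem hi'.1 (by omega) hm (by omega) _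
  · intro j' hj'
    rw [Finset.mem_Icc] at hj'
    exact gen_mem hj'.1 (by omega) hm (by omega) _
  · rintro ⟨n1, n2, n3⟩
    have hpf := hAB _ _ (pnat_cast_pos n2) (pnat_cast_pos n3)
    simp only [TZfam, pYZX, pZYX, Equiv.coe_fn_mk]
    set x : ℝ := ((n1:ℕ):ℝ)
    set y : ℝ := ((n2:ℕ):ℝ)
    set z : ℝ := ((n3:ℕ):ℝ)
    rw [show z + y = y + z from by ring, show y + z + x = x + y + z from by ring]
    rw [show (1:ℝ)/(y^i * z^j * (x+y+z)^m) = (1/(y^i * z^j)) * (1/(x+y+z)^m) from by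
      rw [div_mul_div_comm, one_mul, mul_assoc]]
    rw [hpf, add_mul, Finset.sum_mul, Finset.sum_mul]
    congr 1
    · refine Finset.sum_congr rfl fun i' _ => ?_
      rw [div_mul_div_comm, mul_one, mul_one_div]
    · refine Finset.sum_congr rfl fun j' _ => ?_
      rw [div_mul_div_comm, mul_one, mul_one_div]

lemma mem3 {i A σ₃ σ₄ W : ℕ} (hi : 1 ≤ i) (hA : 1 ≤ A) (h3 : 1 ≤ σ₃) (h4 : 2 ≤ σ₄)
    (hw : i + A + σ₃ + σ₄ = W) :
    (fun p : P3 => 1 / (((p.1:ℕ):ℝ)^i * (((p.1:ℕ):ℝ) + ((p.2.1:ℕ):ℝ))^A *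
      ((p.2.2:ℕ):ℝ)^σ₃ *
      (((p.1:ℕ):ℝ) + ((p.2.1:ℕ):ℝ) + ((p.2.2:ℕ):ℝ))^σ₄)) ∈
      Submodule.span ℤ (GenSet W) := by
  obtain ⟨C, D, hCD⟩ := pf_aux (A + σ₃) A σ₃ rfl (by omega)
  refine mem_span_of_eq_sum₂ (I := Finset.Icc 1 A) (J := Finset.Icc 1 σ₃) (cA := C) (cB := D)
    (g := fun j => fun p => TZfam i j (A + σ₃ - j + σ₄) (Equiv.refl P3 p))
    (h := fun j => fun p => 1 / (((p.1:ℕ):ℝ)^i * ((p.2.2:ℕ):ℝ)^j *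
      (((p.1:ℕ):ℝ) + ((p.2.1:ℕ):ℝ) + ((p.2.2:ℕ):ℝ))^(A + σ₃ - j + σ₄))) ?_ ?_ ?_
  · intro j hj
    rw [Finset.mem_Icc] at hj
    exact gen_mem hi hj.1 (by omega) (by omega) _
  · intro j hj
    rw [Finset.mem_Icc] at hj
    exact mem2 hi hj.1 (by omega) (by omega)
  · rintro ⟨n1, n2, n3⟩
    have hpf := hCD _ _ (by positivity : (0:ℝ) < ((n1:ℕ):ℝ) + ((n2:ℕ):ℝ))
      (pnat_cast_pos n3)
    simp only [TZfam, Equiv.refl_apply]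
    set x : ℝ := ((n1:ℕ):ℝ)
    set y : ℝ := ((n2:ℕ):ℝ)
    set z : ℝ := ((n3:ℕ):ℝ)
    rw [show (1:ℝ)/(x^i * (x+y)^A * z^σ₃ * (x+y+z)^σ₄) =
        (1/((x+y)^A * z^σ₃)) * (1/(x^i * (x+y+z)^σ₄)) from by
      rw [div_mul_div_comm, one_mul]
      congr 1
      ring]
    rw [hpf, add_mul, Finset.sum_mul, Finset.sum_mul]
    congr 1
    · refine Finset.sum_congr rfl fun j _ => ?_
      rw [div_mul_div_comm, mul_one, mul_one_div]
      congr 1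
      ring
    · refine Finset.sum_congr rfl fun j _ => ?_
      rw [div_mul_div_comm, mul_one, mul_one_div]
      congr 1
      ring

lemma mem3' {i A σ₃ σ₄ W : ℕ} (hi : 1 ≤ i) (hA : 1 ≤ A) (h3 : 1 ≤ σ₃) (h4 : 2 ≤ σ₄)
    (hw : i + A + σ₃ + σ₄ = W) :
    (fun p : P3 => 1 / (((p.2.1:ℕ):ℝ)^i * (((p.1:ℕ):ℝ) + ((p.2.1:ℕ):ℝ))^A *
      ((p.2.2:ℕ):ℝ)^σ₃ *
      (((p.1:ℕ):ℝ) + ((p.2.1:ℕ):ℝ) + ((p.2.2:ℕ):ℝ))^σ₄)) ∈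
      Submodule.span ℤ (GenSet W) := by
  obtain ⟨C, D, hCD⟩ := pf_aux (A + σ₃) A σ₃ rfl (by omega)
  refine mem_span_of_eq_sum₂ (I := Finset.Icc 1 A) (J := Finset.Icc 1 σ₃) (cA := C) (cB := D)
    (g := fun j => fun p => TZfam i j (A + σ₃ - j + σ₄) (pYXZ p))
    (h := fun j => fun p => 1 / (((p.2.1:ℕ):ℝ)^i * ((p.2.2:ℕ):ℝ)^j *
      (((p.1:ℕ):ℝ) + ((p.2.1:ℕ):ℝ) + ((p.2.2:ℕ):ℝ))^(A + σ₃ - j + σ₄))) ?_ ?_ ?_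
  · intro j hj
    rw [Finset.mem_Icc] at hj
    exact gen_mem hi hj.1 (by omega) (by omega) _
  · intro j hj
    rw [Finset.mem_Icc] at hj
    exact mem2' hi hj.1 (by omega) (by omega)
  · rintro ⟨n1, n2, n3⟩
    have hpf := hCD _ _ (by positivity : (0:ℝ) < ((n1:ℕ):ℝ) + ((n2:ℕ):ℝ))
      (pnat_cast_pos n3)
    simp only [TZfam, pYXZ, Equiv.coe_fn_mk]
    set x : ℝ := ((n1:ℕ):ℝ)
    set y : ℝ := ((n2:ℕ):ℝ)
    set z : ℝ := ((n3:ℕ):ℝ)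
    rw [show y + x = x + y from by ring, show x + y + z = x + y + z from rfl]
    rw [show (1:ℝ)/(y^i * (x+y)^A * z^σ₃ * (x+y+z)^σ₄) =
        (1/((x+y)^A * z^σ₃)) * (1/(y^i * (x+y+z)^σ₄)) from by
      rw [div_mul_div_comm, one_mul]
      congr 1
      ring]
    rw [hpf, add_mul, Finset.sum_mul, Finset.sum_mul]
    congr 1
    · refine Finset.sum_congr rfl fun j _ => ?_
      rw [div_mul_div_comm, mul_one, mul_one_div]
      congr 1
      ring
    · refine Finset.sum_congr rfl fun j _ => ?_
      rw [div_mul_div_comm, mul_one, mul_one_div]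
      congr 1
      ring

lemma main_mem {σ₁ σ₂ σ₃ μ₁ σ₄ : ℕ} (h1 : 1 ≤ σ₁) (h2 : 1 ≤ σ₂) (h3 : 1 ≤ σ₃)
    (hμ : 1 ≤ μ₁) (h4 : 2 ≤ σ₄) :
    (fun n : P3 => 1 / (((n.1:ℕ):ℝ)^σ₁ * ((n.2.1:ℕ):ℝ)^σ₂ *
      (((n.1:ℕ):ℝ) + ((n.2.1:ℕ):ℝ))^μ₁ * ((n.2.2:ℕ):ℝ)^σ₃ *
      (((n.1:ℕ):ℝ) + ((n.2.1:ℕ):ℝ) + ((n.2.2:ℕ):ℝ))^σ₄)) ∈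
      Submodule.span ℤ (GenSet (σ₁ + σ₂ + σ₃ + μ₁ + σ₄)) := by
  obtain ⟨A, B, hAB⟩ := pf_aux (σ₁ + σ₂) σ₁ σ₂ rfl (by omega)
  refine mem_span_of_eq_sum₂ (I := Finset.Icc 1 σ₁) (J := Finset.Icc 1 σ₂) (cA := A) (cB := B)
    (g := fun i => fun p : P3 => 1 / (((p.1:ℕ):ℝ)^i *
      (((p.1:ℕ):ℝ) + ((p.2.1:ℕ):ℝ))^(σ₁ + σ₂ - i + μ₁) * ((p.2.2:ℕ):ℝ)^σ₃ *
      (((p.1:ℕ):ℝ) + ((p.2.1:ℕ):ℝ) + ((p.2.2:ℕ):ℝ))^σ₄))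
    (h := fun i => fun p : P3 => 1 / (((p.2.1:ℕ):ℝ)^i *
      (((p.1:ℕ):ℝ) + ((p.2.1:ℕ):ℝ))^(σ₁ + σ₂ - i + μ₁) * ((p.2.2:ℕ):ℝ)^σ₃ *
      (((p.1:ℕ):ℝ) + ((p.2.1:ℕ):ℝ) + ((p.2.2:ℕ):ℝ))^σ₄)) ?_ ?_ ?_
  · intro i hi
    rw [Finset.mem_Icc] at hi
    exact mem3 hi.1 (by omega) h3 h4 (by omega)
  · intro i hi
    rw [Finset.mem_Icc] at hi
    exact mem3' hi.1 (by omega) h3 h4 (by omega)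
  · rintro ⟨n1, n2, n3⟩
    have hpf := hAB _ _ (pnat_cast_pos n1) (pnat_cast_pos n2)
    simp only []
    set x : ℝ := ((n1:ℕ):ℝ)
    set y : ℝ := ((n2:ℕ):ℝ)
    set z : ℝ := ((n3:ℕ):ℝ)
    rw [show (1:ℝ)/(x^σ₁ * y^σ₂ * (x+y)^μ₁ * z^σ₃ * (x+y+z)^σ₄) =
        (1/(x^σ₁ * y^σ₂)) * (1/((x+y)^μ₁ * z^σ₃ * (x+y+z)^σ₄)) from by
      rw [div_mul_div_comm, one_mul]
      congr 1
      ring]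
    rw [hpf, add_mul, Finset.sum_mul, Finset.sum_mul]
    congr 1
    · refine Finset.sum_congr rfl fun i _ => ?_
      rw [div_mul_div_comm, mul_one, mul_one_div]
      congr 1
      ring
    · refine Finset.sum_congr rfl fun i _ => ?_
      rw [div_mul_div_comm, mul_one, mul_one_div]
      congr 1
      ring

/-- Example 4.5: the Mordell–Tornheim-type triple sum
`∑_{n₁,n₂,n₃ ≥ 1} 1/(n₁^σ₁ n₂^σ₂ (n₁+n₂)^μ₁ n₃^σ₃ (n₁+n₂+n₃)^σ₄)` is a finite
`ℤ`-linear combination of triple zeta values of weight `σ₁+σ₂+σ₃+μ₁+σ₄`. -/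
theorem tripleGraphSum_isZLinearComb_tripleZeta (σ₁ σ₂ σ₃ μ₁ σ₄ : ℕ)
    (h1 : 1 ≤ σ₁) (h2 : 1 ≤ σ₂) (h3 : 1 ≤ σ₃) (hμ : 1 ≤ μ₁) (h4 : 2 ≤ σ₄) :
    ∃ (T : Finset (ℕ × ℕ × ℕ)) (c : ℕ × ℕ × ℕ → ℤ),
      (∀ t ∈ T, 1 ≤ t.1 ∧ 1 ≤ t.2.1 ∧ 2 ≤ t.2.2 ∧
        t.1 + t.2.1 + t.2.2 = σ₁ + σ₂ + σ₃ + μ₁ + σ₄) ∧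
      (∑' n : ℕ+ × ℕ+ × ℕ+,
          1 / (((n.1 : ℕ) : ℝ) ^ σ₁ * ((n.2.1 : ℕ) : ℝ) ^ σ₂ *
                (((n.1 : ℕ) : ℝ) + ((n.2.1 : ℕ) : ℝ)) ^ μ₁ *
                ((n.2.2 : ℕ) : ℝ) ^ σ₃ *
                (((n.1 : ℕ) : ℝ) + ((n.2.1 : ℕ) : ℝ) + ((n.2.2 : ℕ) : ℝ)) ^ σ₄)) =
        ∑ t ∈ T, (c t : ℝ) * tripleZeta t.1 t.2.1 t.2.2 := by
  obtain ⟨hsum, T, c, hT, he⟩ := extract (main_mem h1 h2 h3 hμ h4)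
  exact ⟨T, c, hT, he⟩
end

section
/- For all positive integers $\sigma_1, \sigma_2, \sigma_3, \sigma_4$ with $\sigma_4 \geq 2$, the Mordell–Tornheim sum $T(\sigma_1,\sigma_2,\sigma_3;\sigma_4) = \sum_{n_1,n_2,n_3 \geq 1} \frac{1}{n_1^{\sigma_1} n_2^{\sigma_2} n_3^{\sigma_3} (n_1+n_2+n_3)^{\sigma_4}}$ is a finite $\mathbb{Z}$-linear combination of triple zeta values $\zeta(t_1,t_2,t_3)$ of weight $t_1+t_2+t_3 = \sigma_1+\sigma_2+\sigma_3+\sigma_4$. -/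
set_option maxHeartbeats 1000000


namespace MTAux

abbrev Tr : Type := ℕ+ × ℕ+ × ℕ+

noncomputable def cx (p : Tr) : ℝ := ((p.1 : ℕ) : ℝ)
noncomputable def cy (p : Tr) : ℝ := ((p.2.1 : ℕ) : ℝ)
noncomputable def cz (p : Tr) : ℝ := ((p.2.2 : ℕ) : ℝ)

lemma one_le_cx (p : Tr) : (1:ℝ) ≤ cx p := by
  unfold cx; exact_mod_cast p.1.one_le
lemma one_le_cy (p : Tr) : (1:ℝ) ≤ cy p := by
  unfold cy; exact_mod_cast p.2.1.one_le
lemma one_le_cz (p : Tr) : (1:ℝ) ≤ cz p := by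
  unfold cz; exact_mod_cast p.2.2.one_le

/-- A chain-form term: its tsum is `tripleZeta a b c`. -/
noncomputable def chain (a b c : ℕ) (p : Tr) : ℝ :=
  1 / (cx p ^ a * (cx p + cy p) ^ b * (cx p + cy p + cz p) ^ c)

lemma tripleZeta_eq (a b c : ℕ) : tripleZeta a b c = ∑' p : Tr, chain a b c p := rfl

/-- The master majorant. -/
noncomputable def hfun (p : Tr) : ℝ := 1 / (cx p * cy p * cz p * (cx p + cy p + cz p))

lemma summable_hfun : Summable hfun := by
  have hsum : Summable (fun n : ℕ => (n : ℝ) ^ (-(4/3) : ℝ)) :=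
    Real.summable_nat_rpow.2 (by norm_num)
  have hr : Summable (fun k : ℕ+ => ((k : ℕ) : ℝ) ^ (-(4/3) : ℝ)) :=
    hsum.comp_injective PNat.coe_injective
  have hrne : ∀ k : ℕ+, 0 ≤ ((k:ℕ):ℝ) ^ (-(4/3):ℝ) :=
    fun k => Real.rpow_nonneg (by positivity) _
  have h23 : Summable (fun q : ℕ+ × ℕ+ =>
      ((q.1:ℕ):ℝ) ^ (-(4/3):ℝ) * ((q.2:ℕ):ℝ) ^ (-(4/3):ℝ)) :=
    hr.mul_of_nonneg hr (fun k => hrne k) (fun k => hrne k)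
  have h3 : Summable (fun p : Tr =>
      ((p.1:ℕ):ℝ) ^ (-(4/3):ℝ) * (((p.2.1:ℕ):ℝ) ^ (-(4/3):ℝ) * ((p.2.2:ℕ):ℝ) ^ (-(4/3):ℝ))) :=
    hr.mul_of_nonneg h23 (fun k => hrne k)
      (fun q => mul_nonneg (hrne _) (hrne _))
  apply Summable.of_nonneg_of_le _ _ h3
  · intro p
    unfold hfun cx cy cz
    positivity
  · intro p
    have hx := one_le_cx p; have hy := one_le_cy p; have hz := one_le_cz p
    set x := cx p with hxd; set y := cy p with hyd; set z := cz p with hzd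
    have hx0 : (0:ℝ) < x := lt_of_lt_of_le one_pos hx
    have hy0 : (0:ℝ) < y := lt_of_lt_of_le one_pos hy
    have hz0 : (0:ℝ) < z := lt_of_lt_of_le one_pos hz
    have hA : (0:ℝ) < x*y*z := by positivity
    have hS : (0:ℝ) < x+y+z := by positivity
    have hB : (0:ℝ) < x*y*z*(x+y+z) := by positivity
    have key4 : (x*y*z) ^ (4:ℕ) ≤ (x*y*z*(x+y+z)) ^ (3:ℕ) := by
      have hxyz : x*y*z ≤ (x+y+z)*((x+y+z)*(x+y+z)) := by
        calc x*y*z = x*(y*z) := by ring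
          _ ≤ (x+y+z)*((x+y+z)*(x+y+z)) := by
              apply mul_le_mul (by linarith)
                (mul_le_mul (by linarith) (by linarith) hz0.le hS.le)
                (by positivity) hS.le
      calc (x*y*z) ^ (4:ℕ) = (x*y*z) ^ (3:ℕ) * (x*(y*z)) := by ring
        _ ≤ (x*y*z) ^ (3:ℕ) * ((x+y+z)*((x+y+z)*(x+y+z))) := by
            apply mul_le_mul_of_nonneg_left _ (by positivity)
            calc x*(y*z) = x*y*z := by ring
              _ ≤ (x+y+z)*((x+y+z)*(x+y+z)) := hxyz
        _ = (x*y*z*(x+y+z)) ^ (3:ℕ) := by ring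
    have key : (x*y*z) ^ ((4:ℝ)/3) ≤ x*y*z*(x+y+z) := by
      have h1 : ((x*y*z) ^ (4:ℕ)) ^ ((1:ℝ)/3) ≤ ((x*y*z*(x+y+z)) ^ (3:ℕ)) ^ ((1:ℝ)/3) :=
        Real.rpow_le_rpow (by positivity) key4 (by norm_num)
      rw [← Real.rpow_natCast (x*y*z) 4, ← Real.rpow_natCast (x*y*z*(x+y+z)) 3,
          ← Real.rpow_mul hA.le, ← Real.rpow_mul hB.le] at h1
      norm_num at h1
      convert h1 using 2<;> norm_num
    have hmain : hfun p ≤ (x*y*z) ^ (-((4:ℝ)/3)) := by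
      rw [Real.rpow_neg hA.le]
      unfold hfun
      rw [← hxd, ← hyd, ← hzd, one_div]
      exact inv_anti₀ (by positivity) key
    calc hfun p ≤ (x*y*z) ^ (-((4:ℝ)/3)) := hmain
      _ = x ^ (-(4/3):ℝ) * (y ^ (-(4/3):ℝ) * z ^ (-(4/3):ℝ)) := by
          rw [show (-((4:ℝ)/3)) = (-(4/3):ℝ) by norm_num,
            Real.mul_rpow (by positivity) hz0.le, Real.mul_rpow hx0.le hy0.le]
          ring

lemma chain_le_hfun {a b c : ℕ} (ha : 1 ≤ a) (hb : 1 ≤ b) (hc : 2 ≤ c) (p : Tr) :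
    chain a b c p ≤ hfun p := by
  have hx := one_le_cx p; have hy := one_le_cy p; have hz := one_le_cz p
  have hx0 : (0:ℝ) < cx p := lt_of_lt_of_le one_pos hx
  have hy0 : (0:ℝ) < cy p := lt_of_lt_of_le one_pos hy
  have hz0 : (0:ℝ) < cz p := lt_of_lt_of_le one_pos hz
  have hS : (0:ℝ) < cx p + cy p + cz p := by positivity
  unfold chain hfun
  apply one_div_le_one_div_of_le (by positivity)
  have e1 : cx p ≤ cx p ^ a := le_self_pow₀ hx (by omega)
  have e2 : cy p ≤ (cx p + cy p) ^ b :=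
    le_trans (by linarith) (le_self_pow₀ (by linarith) (by omega))
  have e3 : cz p * (cx p + cy p + cz p) ≤ (cx p + cy p + cz p) ^ c := by
    calc cz p * (cx p + cy p + cz p)
        ≤ (cx p + cy p + cz p) * (cx p + cy p + cz p) :=
          mul_le_mul (by linarith) le_rfl hS.le hS.le
      _ = (cx p + cy p + cz p) ^ 2 := by ring
      _ ≤ (cx p + cy p + cz p) ^ c := pow_le_pow_right₀ (by linarith) hc
  calc cx p * cy p * cz p * (cx p + cy p + cz p)
      = (cx p * cy p) * (cz p * (cx p + cy p + cz p)) := by ring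
    _ ≤ (cx p ^ a * (cx p + cy p) ^ b) * (cx p + cy p + cz p) ^ c := by
        apply mul_le_mul (mul_le_mul e1 e2 hy0.le (by positivity)) e3 (by positivity)
          (by positivity)
    _ = cx p ^ a * (cx p + cy p) ^ b * (cx p + cy p + cz p) ^ c := by ring

lemma chain_nonneg (a b c : ℕ) (p : Tr) : 0 ≤ chain a b c p := by
  unfold chain cx cy cz; positivity

lemma summable_chain {a b c : ℕ} (ha : 1 ≤ a) (hb : 1 ≤ b) (hc : 2 ≤ c) :
    Summable (chain a b c) :=
  Summable.of_nonneg_of_le (chain_nonneg a b c) (chain_le_hfun ha hb hc) summable_hfun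

noncomputable def zfun : ℕ × ℕ × ℕ → ℝ := fun t => tripleZeta t.1 t.2.1 t.2.2

def zdom (w : ℕ) : Set (ℕ × ℕ × ℕ) :=
  {t | 1 ≤ t.1 ∧ 1 ≤ t.2.1 ∧ 2 ≤ t.2.2 ∧ t.1 + t.2.1 + t.2.2 = w}

/-- A function is Good if it is summable and its sum lies in the `ℤ`-span of the
weight-`w` triple zeta values. -/
def Good (w : ℕ) (f : Tr → ℝ) : Prop :=
  Summable f ∧ (∑' p, f p) ∈ Submodule.span ℤ (zfun '' zdom w)

lemma Good.add {w : ℕ} {f g : Tr → ℝ} (hf : Good w f) (hg : Good w g) :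
    Good w (fun p => f p + g p) :=
  ⟨hf.1.add hg.1, by rw [Summable.tsum_add hf.1 hg.1]; exact add_mem hf.2 hg.2⟩

lemma Good.congr {w : ℕ} {f g : Tr → ℝ} (hg : Good w g) (h : ∀ p, f p = g p) :
    Good w f := by
  have hfg : f = g := funext h
  rw [hfg]; exact hg

lemma Good.comp {w : ℕ} {f : Tr → ℝ} (hf : Good w f) (e : Tr ≃ Tr) :
    Good w (fun p => f (e p)) :=
  ⟨(e.summable_iff (f := f)).2 hf.1, by rw [e.tsum_eq f]; exact hf.2⟩

lemma good_chain {w a b c : ℕ} (ha : 1 ≤ a) (hb : 1 ≤ b) (hc : 2 ≤ c)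
    (hw : a + b + c = w) : Good w (chain a b c) := by
  refine ⟨summable_chain ha hb hc, ?_⟩
  apply Submodule.subset_span
  exact ⟨(a, b, c), ⟨ha, hb, hc, hw⟩, (tripleZeta_eq a b c).symm⟩

def swap12 : Tr ≃ Tr :=
  ⟨fun p => (p.2.1, p.1, p.2.2), fun p => (p.2.1, p.1, p.2.2), fun p => rfl, fun p => rfl⟩

def e1 : Tr ≃ Tr :=
  ⟨fun p => (p.1, p.2.2, p.2.1), fun p => (p.1, p.2.2, p.2.1), fun p => rfl, fun p => rfl⟩

def e2 : Tr ≃ Tr :=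
  ⟨fun p => (p.2.2, p.1, p.2.1), fun p => (p.2.1, p.2.2, p.1), fun p => rfl, fun p => rfl⟩

@[simp] lemma swap12_apply (p : Tr) : swap12 p = (p.2.1, p.1, p.2.2) := rfl
@[simp] lemma e1_apply (p : Tr) : e1 p = (p.1, p.2.2, p.2.1) := rfl
@[simp] lemma e2_apply (p : Tr) : e2 p = (p.2.2, p.1, p.2.1) := rfl

@[simp] lemma cx_mk (a b c : ℕ+) : cx (a, b, c) = ((a:ℕ):ℝ) := rfl
@[simp] lemma cy_mk (a b c : ℕ+) : cy (a, b, c) = ((b:ℕ):ℝ) := rfl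
@[simp] lemma cz_mk (a b c : ℕ+) : cz (a, b, c) = ((c:ℕ):ℝ) := rfl

lemma L3 (w : ℕ) : ∀ n a b c r, a + b ≤ n → 2 ≤ r → a + b + c + r = w →
    ((1 ≤ a ∧ 1 ≤ b) ∨ (1 ≤ a ∧ 1 ≤ c) ∨ (1 ≤ b ∧ 1 ≤ c)) →
    Good w (fun p => 1 / (cx p ^ a * cz p ^ b * (cx p + cz p) ^ c *
      (cx p + cy p + cz p) ^ r)) := by
  intro n
  induction n with
  | zero =>
    intro a b c r hab hr hw hd
    exfalso; omega
  | succ n ih =>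
    intro a b c r hab hr hw hd
    by_cases ha : a = 0
    · subst ha
      have hb : 1 ≤ b := by omega
      have hc : 1 ≤ c := by omega
      refine Good.congr ((good_chain hb hc hr (by omega)).comp e2) ?_
      intro p
      simp only [e2_apply, chain, cx, cy, cz]
      ring
    · by_cases hb : b = 0
      · subst hb
        have ha1 : 1 ≤ a := by omega
        have hc : 1 ≤ c := by omega
        refine Good.congr ((good_chain ha1 hc hr (by omega)).comp e1) ?_
        intro p
        simp only [e1_apply, chain, cx, cy, cz]
        ring
      · have ha1 : 1 ≤ a := by omega
        have hb1 : 1 ≤ b := by omega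
        have g1 := ih (a-1) b (c+1) r (by omega) hr (by omega) (by omega)
        have g2 := ih a (b-1) (c+1) r (by omega) hr (by omega) (by omega)
        refine Good.congr (g1.add g2) ?_
        intro p
        obtain ⟨a', rfl⟩ : ∃ a', a = a' + 1 := ⟨a - 1, by omega⟩
        obtain ⟨b', rfl⟩ : ∃ b', b = b' + 1 := ⟨b - 1, by omega⟩
        simp only [Nat.add_sub_cancel]
        have hx := one_le_cx p; have hy := one_le_cy p; have hz := one_le_cz p
        have hx0 : (0:ℝ) < cx p := lt_of_lt_of_le one_pos hx
        have hy0 : (0:ℝ) < cy p := lt_of_lt_of_le one_pos hy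
        have hz0 : (0:ℝ) < cz p := lt_of_lt_of_le one_pos hz
        have hu0 : (0:ℝ) < cx p + cz p := by positivity
        have hs0 : (0:ℝ) < cx p + cy p + cz p := by positivity
        field_simp
        ring

lemma L2 (w : ℕ) : ∀ n a b c r, b + c ≤ n → 1 ≤ a → 2 ≤ r → a + b + c + r = w →
    1 ≤ b + c →
    Good w (fun p => 1 / (cx p ^ a * (cx p + cy p) ^ b * cz p ^ c *
      (cx p + cy p + cz p) ^ r)) := by
  intro n
  induction n with
  | zero =>
    intro a b c r hbc ha hr hw hd
    exfalso; omega
  | succ n ih =>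
    intro a b c r hbc ha hr hw hd
    by_cases hc : c = 0
    · subst hc
      have hb : 1 ≤ b := by omega
      refine Good.congr (good_chain ha hb hr (by omega)) ?_
      intro p
      unfold chain
      ring
    · by_cases hb : b = 0
      · subst hb
        have hc1 : 1 ≤ c := by omega
        refine Good.congr (L3 w (a + c) a c 0 r le_rfl hr (by omega) (by omega)) ?_
        intro p
        ring
      · have hb1 : 1 ≤ b := by omega
        have hc1 : 1 ≤ c := by omega
        have g1 := ih a (b-1) c (r+1) (by omega) ha (by omega) (by omega) (by omega)
        have g2 := ih a b (c-1) (r+1) (by omega) ha (by omega) (by omega) (by omega)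
        refine Good.congr (g1.add g2) ?_
        intro p
        obtain ⟨b', rfl⟩ : ∃ b', b = b' + 1 := ⟨b - 1, by omega⟩
        obtain ⟨c', rfl⟩ : ∃ c', c = c' + 1 := ⟨c - 1, by omega⟩
        simp only [Nat.add_sub_cancel]
        have hx := one_le_cx p; have hy := one_le_cy p; have hz := one_le_cz p
        have hx0 : (0:ℝ) < cx p := lt_of_lt_of_le one_pos hx
        have hy0 : (0:ℝ) < cy p := lt_of_lt_of_le one_pos hy
        have hz0 : (0:ℝ) < cz p := lt_of_lt_of_le one_pos hz
        have hm0 : (0:ℝ) < cx p + cy p := by positivity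
        have hs0 : (0:ℝ) < cx p + cy p + cz p := by positivity
        field_simp
        ring

lemma L1 (w : ℕ) : ∀ n a b e c r, a + b ≤ n → 1 ≤ c → 2 ≤ r →
    a + b + e + c + r = w → (1 ≤ a ∨ 1 ≤ b) →
    Good w (fun p => 1 / (cx p ^ a * cy p ^ b * (cx p + cy p) ^ e * cz p ^ c *
      (cx p + cy p + cz p) ^ r)) := by
  intro n
  induction n with
  | zero =>
    intro a b e c r hab hc hr hw hd
    exfalso; omega
  | succ n ih =>
    intro a b e c r hab hc hr hw hd
    by_cases ha : a = 0
    · subst ha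
      have hb : 1 ≤ b := by omega
      refine Good.congr ((L2 w (e + c) b e c r le_rfl hb hr (by omega) (by omega)).comp
        swap12) ?_
      intro p
      simp only [swap12_apply, cx, cy, cz]
      ring
    · by_cases hb : b = 0
      · subst hb
        have ha1 : 1 ≤ a := by omega
        refine Good.congr (L2 w (e + c) a e c r le_rfl ha1 hr (by omega) (by omega)) ?_
        intro p
        ring
      · have ha1 : 1 ≤ a := by omega
        have hb1 : 1 ≤ b := by omega
        have g1 := ih (a-1) b (e+1) c r (by omega) hc hr (by omega) (by omega)
        have g2 := ih a (b-1) (e+1) c r (by omega) hc hr (by omega) (by omega)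
        refine Good.congr (g1.add g2) ?_
        intro p
        obtain ⟨a', rfl⟩ : ∃ a', a = a' + 1 := ⟨a - 1, by omega⟩
        obtain ⟨b', rfl⟩ : ∃ b', b = b' + 1 := ⟨b - 1, by omega⟩
        simp only [Nat.add_sub_cancel]
        have hx := one_le_cx p; have hy := one_le_cy p; have hz := one_le_cz p
        have hx0 : (0:ℝ) < cx p := lt_of_lt_of_le one_pos hx
        have hy0 : (0:ℝ) < cy p := lt_of_lt_of_le one_pos hy
        have hz0 : (0:ℝ) < cz p := lt_of_lt_of_le one_pos hz
        have hm0 : (0:ℝ) < cx p + cy p := by positivity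
        have hs0 : (0:ℝ) < cx p + cy p + cz p := by positivity
        field_simp
        ring

end MTAux

/-- Example 4.5' (Bradley–Zhou for depth 3): the Mordell–Tornheim sum
`T(σ₁,σ₂,σ₃;σ₄) = ∑_{n₁,n₂,n₃ ≥ 1} 1/(n₁^σ₁ n₂^σ₂ n₃^σ₃ (n₁+n₂+n₃)^σ₄)` is a finite
`ℤ`-linear combination of triple zeta values of weight `σ₁+σ₂+σ₃+σ₄`. -/
theorem mordellTornheim_depth_three (σ₁ σ₂ σ₃ σ₄ : ℕ)
    (h1 : 1 ≤ σ₁) (h2 : 1 ≤ σ₂) (h3 : 1 ≤ σ₃) (h4 : 2 ≤ σ₄) :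
    ∃ (T : Finset (ℕ × ℕ × ℕ)) (c : ℕ × ℕ × ℕ → ℤ),
      (∀ t ∈ T, 1 ≤ t.1 ∧ 1 ≤ t.2.1 ∧ 2 ≤ t.2.2 ∧
        t.1 + t.2.1 + t.2.2 = σ₁ + σ₂ + σ₃ + σ₄) ∧
      (∑' n : ℕ+ × ℕ+ × ℕ+,
          1 / (((n.1 : ℕ) : ℝ) ^ σ₁ * ((n.2.1 : ℕ) : ℝ) ^ σ₂ * ((n.2.2 : ℕ) : ℝ) ^ σ₃ *
                (((n.1 : ℕ) : ℝ) + ((n.2.1 : ℕ) : ℝ) + ((n.2.2 : ℕ) : ℝ)) ^ σ₄)) =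
        ∑ t ∈ T, (c t : ℝ) * tripleZeta t.1 t.2.1 t.2.2 := by
  classical
  set w := σ₁ + σ₂ + σ₃ + σ₄ with hwdef
  have hG : MTAux.Good w (fun p : MTAux.Tr =>
      1 / (MTAux.cx p ^ σ₁ * MTAux.cy p ^ σ₂ * MTAux.cz p ^ σ₃ *
        (MTAux.cx p + MTAux.cy p + MTAux.cz p) ^ σ₄)) := by
    refine MTAux.Good.congr
      (MTAux.L1 w (σ₁ + σ₂) σ₁ σ₂ 0 σ₃ σ₄ le_rfl h3 h4 (by omega) (Or.inl h1)) ?_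
    intro p
    ring
  obtain ⟨hs, hmem⟩ := hG
  rw [Finsupp.mem_span_image_iff_linearCombination] at hmem
  obtain ⟨l, hl, hrepr⟩ := hmem
  refine ⟨l.support, fun t => l t, ?_, ?_⟩
  · intro t ht
    have hsub := (Finsupp.mem_supported ℤ l).1 hl
    exact hsub (Finset.mem_coe.2 ht)
  · have h0 : (∑' n : ℕ+ × ℕ+ × ℕ+,
        1 / (((n.1 : ℕ) : ℝ) ^ σ₁ * ((n.2.1 : ℕ) : ℝ) ^ σ₂ * ((n.2.2 : ℕ) : ℝ) ^ σ₃ *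
              (((n.1 : ℕ) : ℝ) + ((n.2.1 : ℕ) : ℝ) + ((n.2.2 : ℕ) : ℝ)) ^ σ₄)) =
        Finsupp.linearCombination ℤ MTAux.zfun l := hrepr.symm
    rw [h0, Finsupp.linearCombination_apply, Finsupp.sum]
    apply Finset.sum_congr rfl
    intro t _
    rw [zsmul_eq_mul]
    rfl
end

section
/- For all positive integers $\sigma_1, \dots, \sigma_{m-1}, \sigma_m$ with $\sigma_m \geq 2$, the Mordell–Tornheim sum $T(\sigma_1,\dots,\sigma_{m-1};\sigma_m) = \sum_{n_1,\dots,n_{m-1}\geq 1} \frac{1}{n_1^{\sigma_1}\cdots n_{m-1}^{\sigma_{m-1}} (n_1+\cdots+n_{m-1})^{\sigma_m}}$ converges and is a finite $\mathbb{Z}$-linear combination of multiple zeta values of depth $m-1$ and weight $\sigma_1 + \cdots + \sigma_m$. -/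
/-!
Call `∏ⱼ (n_{τ 0} + ⋯ + n_{τ j})^{-uⱼ}` a chain monomial: it is the summand of `ζ(u)` with the
variables permuted by `τ`. The partial fraction identity
`1/(X^(p+1) W^(q+1) S^r) = 1/(X^p W^(q+1) S^(r+1)) + 1/(X^(p+1) W^q S^(r+1))` for `S = X + W`
shows, by induction on the number of variables, that `∏ᵢ nᵢ^{-σᵢ}` is a `ℤ`-linear combination
of chain monomials of weight `∑ σᵢ` with all exponents `≥ 1`. The last partial sum of every
chain is `n₁ + ⋯ + n_d`, so the extra factor `(n₁ + ⋯ + n_d)^{-s}` only raises the last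
exponent, and summing a chain monomial over all `n` gives a multiple zeta value.
Convergence: a chain monomial with last exponent `≥ 2` is at most `(∏ nᵢ)⁻¹ (∑ nᵢ)⁻¹`, and
`∑ nᵢ ≥ (∏ nᵢ)^{1/d}` bounds this by the summable `∏ nᵢ^{-(1 + 1/d)}`.
-/

/-- The multiple zeta value of depth `d`:
`ζ(t₁, …, t_d) = ∑_{0 < k₁ < ⋯ < k_d} ∏ⱼ kⱼ^{-tⱼ}`, parametrized by
`kⱼ = n₁ + ⋯ + nⱼ` over independent positive integers `n₁, …, n_d`. -/
noncomputable def multipleZeta (d : ℕ) (t : Fin d → ℕ) : ℝ :=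
  ∑' n : Fin d → ℕ+,
    ∏ j, 1 / (∑ l ∈ Finset.univ.filter (fun l => l ≤ j), (((n l : ℕ)) : ℝ)) ^ (t j)

open Finset

variable {d : ℕ}

noncomputable def partialSum (n : Fin d → ℕ+) (j : Fin d) : ℝ :=
  ∑ l ∈ univ.filter (fun l => l ≤ j), ((n l : ℕ) : ℝ)

noncomputable def chainMonomial (u : Fin d → ℕ) (n : Fin d → ℕ+) : ℝ :=
  ∏ j, 1 / partialSum n j ^ u j

theorem multipleZeta_eq_tsum_chainMonomial (t : Fin d → ℕ) :
    multipleZeta d t = ∑' n, chainMonomial t n := rfl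

theorem partialSum_castSucc (n : Fin (d + 1) → ℕ+) (j : Fin d) :
    partialSum n j.castSucc = partialSum (n ∘ Fin.castSucc) j := by
  rw [partialSum, partialSum, sum_filter, sum_filter, Fin.sum_univ_castSucc]
  simp [(Fin.castSucc_lt_last j).not_ge]

theorem partialSum_last (n : Fin (d + 1) → ℕ+) :
    partialSum n (Fin.last d) = ∑ l, ((n l : ℕ) : ℝ) := by
  simp [partialSum, Fin.le_last]

theorem le_partialSum (n : Fin d → ℕ+) (j : Fin d) : ((n j : ℕ) : ℝ) ≤ partialSum n j :=
  single_le_sum (f := fun l => ((n l : ℕ) : ℝ)) (fun l _ => Nat.cast_nonneg _) (by simp)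

theorem one_le_partialSum (n : Fin d → ℕ+) (j : Fin d) : 1 ≤ partialSum n j :=
  le_trans (by exact_mod_cast (n j).pos) (le_partialSum n j)

theorem chainMonomial_succ (u : Fin (d + 1) → ℕ) (n : Fin (d + 1) → ℕ+) :
    chainMonomial u n = chainMonomial (u ∘ Fin.castSucc) (n ∘ Fin.castSucc) *
      (1 / (∑ l, ((n l : ℕ) : ℝ)) ^ u (Fin.last d)) := by
  simp only [chainMonomial, Fin.prod_univ_castSucc, partialSum_castSucc, partialSum_last,
    Function.comp_apply]

theorem exists_perm_comp_castSucc (p : Fin (d + 1)) (τ : Equiv.Perm (Fin d)) :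
    ∃ τ' : Equiv.Perm (Fin (d + 1)),
      ⇑τ' ∘ Fin.castSucc = p.succAbove ∘ τ ∧ τ' (Fin.last d) = p := by
  have hinj : Function.Injective (Fin.snoc (α := fun _ => Fin (d + 1)) (p.succAbove ∘ τ) p) :=
    Fin.snoc_injective_of_injective ((Fin.succAbove_right_injective).comp τ.injective)
      (by rintro ⟨i, hi⟩; exact Fin.succAbove_ne p (τ i) hi)
  refine ⟨Equiv.ofBijective _ (Finite.injective_iff_bijective.mp hinj), ?_, ?_⟩
  · funext i; simp
  · simp

def chainSpan (d w : ℕ) : Submodule ℤ ((Fin d → ℕ+) → ℝ) :=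
  Submodule.span ℤ {F | ∃ (τ : Equiv.Perm (Fin d)) (u : Fin d → ℕ),
    (∀ j, 1 ≤ u j) ∧ ∑ j, u j = w ∧ F = fun n => chainMonomial u (n ∘ τ)}

variable {w : ℕ}

theorem chainMonomial_comp_mem_chainSpan (τ : Equiv.Perm (Fin d)) {u : Fin d → ℕ}
    (hu : ∀ j, 1 ≤ u j) (hw : ∑ j, u j = w) :
    (fun n => chainMonomial u (n ∘ τ)) ∈ chainSpan d w :=
  Submodule.subset_span ⟨τ, u, hu, hw, rfl⟩

theorem chainMonomial_mem_chainSpan {u : Fin d → ℕ} (hu : ∀ j, 1 ≤ u j)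
    (hw : ∑ j, u j = w) :
    chainMonomial u ∈ chainSpan d w :=
  chainMonomial_comp_mem_chainSpan 1 hu hw

theorem comp_mul_mem_chainSpan {d' w' : ℕ} {g : (Fin d' → ℕ+) → Fin d → ℕ+}
    {h : (Fin d' → ℕ+) → ℝ}
    (hgen : ∀ (τ : Equiv.Perm (Fin d)) (u : Fin d → ℕ), (∀ j, 1 ≤ u j) → ∑ j, u j = w →
      (fun n => chainMonomial u (g n ∘ τ) * h n) ∈ chainSpan d' w')
    {F : (Fin d → ℕ+) → ℝ} (hF : F ∈ chainSpan d w) :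
    (fun n => F (g n) * h n) ∈ chainSpan d' w' := by
  induction hF using Submodule.span_induction with
  | mem F hF =>
    obtain ⟨τ, u, hu, hw, rfl⟩ := hF
    exact hgen τ u hu hw
  | zero => convert (chainSpan d' w').zero_mem using 1; ext; simp
  | add F G _ _ hF hG => convert add_mem hF hG using 1; ext; simp [add_mul]
  | smul c F _ hF => convert (chainSpan d' w').smul_mem c hF using 1; ext; simp [mul_assoc]

theorem comp_perm_mem_chainSpan (φ : Equiv.Perm (Fin d)) {F : (Fin d → ℕ+) → ℝ}
    (hF : F ∈ chainSpan d w) : (fun n => F (n ∘ φ)) ∈ chainSpan d w := by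
  simpa using comp_mul_mem_chainSpan (g := (· ∘ φ)) (h := 1)
    (fun τ u hu hw => by
      simpa [Function.comp_assoc] using chainMonomial_comp_mem_chainSpan (φ * τ) hu hw) hF

theorem mul_one_div_sum_pow_mem_chainSpan (p : Fin (d + 1)) {c : ℕ} (hc : 1 ≤ c)
    {F : (Fin d → ℕ+) → ℝ} (hF : F ∈ chainSpan d w) :
    (fun n : Fin (d + 1) → ℕ+ => F (n ∘ p.succAbove) * (1 / (∑ l, ((n l : ℕ) : ℝ)) ^ c)) ∈
      chainSpan (d + 1) (w + c) := by
  refine comp_mul_mem_chainSpan (fun τ u hu hw => ?_) hF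
  obtain ⟨τ', hτ'c, hτ'l⟩ := exists_perm_comp_castSucc p τ
  have hmem := chainMonomial_comp_mem_chainSpan τ' (u := Fin.snoc u c)
    (Fin.lastCases (by simpa using hc) (by simpa using hu))
    (by simp [Fin.sum_univ_castSucc, hw] : ∑ j, Fin.snoc (α := fun _ => ℕ) u c j = w + c)
  refine (congrArg (· ∈ chainSpan (d + 1) (w + c)) (funext fun n => ?_)).mp hmem
  rw [chainMonomial_succ, Function.comp_assoc, hτ'c]
  simp only [Function.comp_apply, Equiv.sum_comp τ' fun l => ((n l : ℕ) : ℝ)]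
  simp [Function.comp_def]

theorem one_div_pow_succ_mul_pow_succ_mul_pow {K : Type*} [Field K] {x y : K} (hx : x ≠ 0)
    (hy : y ≠ 0) (hxy : x + y ≠ 0) (p q r : ℕ) :
    1 / (x ^ (p + 1) * y ^ (q + 1) * (x + y) ^ r) =
      1 / (x ^ p * y ^ (q + 1) * (x + y) ^ (r + 1)) +
        1 / (x ^ (p + 1) * y ^ q * (x + y) ^ (r + 1)) := by
  field_simp
  ring

/-- With `X = n₀ + ⋯ + n_m`, `W = n_{m+1}` and `S = X + W`: the partial fraction step lowers
`p` or `q` until `q = 0` (a chain monomial) or `p = 0` (the case `hB`, lifted by `S^r`). -/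
theorem chainMonomial_mul_one_div_pow_mul_pow_mul_pow_mem_chainSpan {m : ℕ} {t : Fin m → ℕ}
    (hB : ∀ q, 1 ≤ q → (fun n : Fin (m + 1) → ℕ+ => chainMonomial t (n ∘ Fin.castSucc) *
      (1 / ((n (Fin.last m) : ℕ) : ℝ) ^ q)) ∈ chainSpan (m + 1) (∑ j, t j + q))
    (ht : ∀ j, 1 ≤ t j) (p q r : ℕ) (hpqr : 1 ≤ p ∧ 1 ≤ q ∨ 1 ≤ p + q ∧ 1 ≤ r) :
    (fun n : Fin (m + 2) → ℕ+ => chainMonomial t (n ∘ Fin.castSucc ∘ Fin.castSucc) *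
      (1 / ((∑ l : Fin (m + 1), ((n l.castSucc : ℕ) : ℝ)) ^ p *
        ((n (Fin.last (m + 1)) : ℕ) : ℝ) ^ q * (∑ l, ((n l : ℕ) : ℝ)) ^ r))) ∈
      chainSpan (m + 2) (∑ j, t j + p + q + r) := by
  induction p generalizing q r with
  | zero =>
    obtain ⟨hq, hr⟩ : 1 ≤ q ∧ 1 ≤ r := by omega
    convert mul_one_div_sum_pow_mem_chainSpan (Fin.last m).castSucc hr (hB q hq) using 2
    · omega
    · rename_i n
      have hcs : n ∘ (Fin.last m).castSucc.succAbove ∘ Fin.castSucc =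
          n ∘ Fin.castSucc ∘ Fin.castSucc := by
        funext i; simp [Fin.succAbove_castSucc_of_lt _ _ (Fin.castSucc_lt_last i)]
      simp only [Function.comp_apply, Function.comp_assoc, hcs, Fin.succAbove_castSucc_self,
        Fin.succ_last]
      ring
  | succ p ihp =>
    induction q generalizing r with
    | zero =>
      have hr : 1 ≤ r := by omega
      convert chainMonomial_mem_chainSpan (u := Fin.snoc (Fin.snoc t (p + 1)) r)
        (Fin.lastCases (by simpa using hr) (Fin.lastCases (by simp) (by simpa using ht)))
        rfl using 2
      · simp [Fin.sum_univ_castSucc]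
      · simp only [chainMonomial_succ, Function.comp_def, pow_zero, mul_one, one_div, mul_inv_rev,
          Fin.snoc_castSucc, Fin.snoc_last]
        ring
    | succ q ihq =>
      have h₁ := ihp (q + 1) (r + 1) (by omega)
      have h₂ := ihq (r + 1) (by omega)
      rw [show ∑ j, t j + p + (q + 1) + (r + 1) = ∑ j, t j + (p + 1) + (q + 1) + r by omega]
        at h₁
      rw [show ∑ j, t j + (p + 1) + q + (r + 1) = ∑ j, t j + (p + 1) + (q + 1) + r by omega]
        at h₂
      convert add_mem h₁ h₂ using 1
      funext n
      have hS : ∑ l, ((n l : ℕ) : ℝ) =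
          ∑ l : Fin (m + 1), ((n l.castSucc : ℕ) : ℝ) + ((n (Fin.last (m + 1)) : ℕ) : ℝ) :=
        Fin.sum_univ_castSucc _
      have hX : (0 : ℝ) < ∑ l : Fin (m + 1), ((n l.castSucc : ℕ) : ℝ) :=
        sum_pos (fun l _ => by exact_mod_cast (n _).pos) univ_nonempty
      have hW : (0 : ℝ) < ((n (Fin.last (m + 1)) : ℕ) : ℝ) := by exact_mod_cast (n _).pos
      rw [Pi.add_apply, ← mul_add, hS, one_div_pow_succ_mul_pow_succ_mul_pow hX.ne' hW.ne'
        (by positivity)]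

theorem chainMonomial_mul_one_div_pow_mem_chainSpan {m : ℕ} {t : Fin m → ℕ}
    (ht : ∀ j, 1 ≤ t j) {q : ℕ} (hq : 1 ≤ q) :
    (fun n : Fin (m + 1) → ℕ+ => chainMonomial t (n ∘ Fin.castSucc) *
      (1 / ((n (Fin.last m) : ℕ) : ℝ) ^ q)) ∈ chainSpan (m + 1) (∑ j, t j + q) := by
  induction m generalizing q with
  | zero =>
    convert chainMonomial_mem_chainSpan (u := fun _ => q) (fun _ => hq) rfl using 2
    · simp
    · simp [chainMonomial, partialSum]
  | succ m ih =>
    convert chainMonomial_mul_one_div_pow_mul_pow_mul_pow_mem_chainSpan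
      (fun q hq => ih (t := t ∘ Fin.castSucc) (fun j => ht _) hq) (fun j => ht _)
      (t (Fin.last m)) q 0 (Or.inl ⟨ht _, hq⟩) using 2
    · simp [Fin.sum_univ_castSucc]
    · rw [chainMonomial_succ]
      simp only [Function.comp_def, Function.comp_apply, one_div, pow_zero, mul_one, mul_inv_rev]
      ring

theorem prod_one_div_pow_mem_chainSpan (σ : Fin d → ℕ) (hσ : ∀ i, 1 ≤ σ i) :
    (fun n : Fin d → ℕ+ => ∏ i, 1 / ((n i : ℕ) : ℝ) ^ σ i) ∈ chainSpan d (∑ i, σ i) := by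
  induction d with
  | zero =>
    convert chainMonomial_mem_chainSpan (u := σ) finZeroElim rfl using 1
    funext n
    simp [chainMonomial]
  | succ d ih =>
    have hmem := comp_mul_mem_chainSpan (g := (· ∘ Fin.castSucc)) (w' := ∑ i, σ i)
      (h := fun n => 1 / ((n (Fin.last d) : ℕ) : ℝ) ^ σ (Fin.last d)) (fun τ u hu hw => ?_)
      (ih (σ ∘ Fin.castSucc) (fun i => hσ _))
    · convert hmem using 1
      funext n
      simp [Fin.prod_univ_castSucc, mul_comm]
    · obtain ⟨τ', hτ'c, hτ'l⟩ := exists_perm_comp_castSucc (Fin.last d) τ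
      convert comp_perm_mem_chainSpan τ'
        (chainMonomial_mul_one_div_pow_mem_chainSpan hu (hσ (Fin.last d))) using 2
      · simp [Fin.sum_univ_castSucc, hw]
      · rename_i n
        rw [Function.comp_assoc, Function.comp_assoc, hτ'c, Fin.succAbove_last]
        simp [hτ'l]

theorem summable_pi_prod {α : Type*} {f : α → ℝ} (hf₀ : 0 ≤ f) (hf : Summable f) :
    ∀ m, Summable (fun n : Fin m → α => ∏ j, f (n j))
  | 0 => .of_finite
  | m + 1 => by
    rw [← (Fin.consEquiv fun _ => α).summable_iff]
    simpa [Function.comp_def, Fin.prod_univ_succ] using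
      hf.mul_of_nonneg (summable_pi_prod hf₀ hf m) hf₀ fun n => prod_nonneg fun j _ => hf₀ _

theorem prod_rpow_one_add_inv_card_le_prod_mul_sum {ι : Type*} [Fintype ι] [Nonempty ι]
    {x : ι → ℝ} (hx : ∀ i, 0 ≤ x i) :
    ∏ i, x i ^ (1 + (Fintype.card ι : ℝ)⁻¹) ≤ (∏ i, x i) * ∑ i, x i := by
  have hk : Fintype.card ι ≠ 0 := Fintype.card_ne_zero
  have h₀ : 0 ≤ ∏ i, x i := prod_nonneg fun i _ => hx i
  have hprod : ∏ i, x i ≤ (∑ i, x i) ^ Fintype.card ι := by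
    simpa using prod_le_prod (s := univ) (fun i _ => hx i)
      fun i _ => single_le_sum (fun j _ => hx j) (mem_univ i)
  calc ∏ i, x i ^ (1 + (Fintype.card ι : ℝ)⁻¹)
      = (∏ i, x i) * (∏ i, x i) ^ (Fintype.card ι : ℝ)⁻¹ := by
        rw [← Real.finsetProd_rpow _ _ (fun i _ => hx i), ← prod_mul_distrib]
        refine prod_congr rfl fun i _ => ?_
        rw [Real.rpow_add' (hx i) (by positivity), Real.rpow_one]
    _ ≤ (∏ i, x i) * ((∑ i, x i) ^ Fintype.card ι) ^ (Fintype.card ι : ℝ)⁻¹ := by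
        gcongr
    _ = (∏ i, x i) * ∑ i, x i := by
        rw [Real.pow_rpow_inv_natCast (sum_nonneg fun i _ => hx i) hk]

theorem chainMonomial_nonneg (u : Fin d → ℕ) (n : Fin d → ℕ+) : 0 ≤ chainMonomial u n :=
  prod_nonneg fun j _ => by have := one_le_partialSum n j; positivity

theorem prod_mul_sum_le_prod_partialSum_pow {u : Fin (d + 1) → ℕ} (hu : ∀ j, 1 ≤ u j)
    (hlast : 2 ≤ u (Fin.last d)) (n : Fin (d + 1) → ℕ+) :
    (∏ j, ((n j : ℕ) : ℝ)) * ∑ j, ((n j : ℕ) : ℝ) ≤ ∏ j, partialSum n j ^ u j := by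
  have hS : ((n (Fin.last d) : ℕ) : ℝ) ≤ ∑ j, ((n j : ℕ) : ℝ) :=
    single_le_sum (f := fun j => ((n j : ℕ) : ℝ)) (fun j _ => Nat.cast_nonneg _) (mem_univ _)
  have hS₁ : 1 ≤ ∑ j, ((n j : ℕ) : ℝ) := (partialSum_last n ▸ one_le_partialSum n _)
  rw [Fin.prod_univ_castSucc, Fin.prod_univ_castSucc, partialSum_last, mul_assoc]
  gcongr with j
  · exact prod_nonneg fun j _ => pow_nonneg (zero_le_one.trans (one_le_partialSum n _)) _
  · exact (le_partialSum n _).trans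
      (le_self_pow₀ (one_le_partialSum n _) (Nat.one_le_iff_ne_zero.mp (hu _)))
  · calc ((n (Fin.last d) : ℕ) : ℝ) * ∑ j, ((n j : ℕ) : ℝ)
        ≤ (∑ j, ((n j : ℕ) : ℝ)) ^ 2 := by rw [sq]; gcongr
      _ ≤ _ := pow_le_pow_right₀ hS₁ hlast

theorem summable_chainMonomial {u : Fin (d + 1) → ℕ} (hu : ∀ j, 1 ≤ u j)
    (hlast : 2 ≤ u (Fin.last d)) : Summable (chainMonomial u) := by
  set p : ℝ := 1 + (Fintype.card (Fin (d + 1)) : ℝ)⁻¹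
  have hf : Summable fun a : ℕ+ => (((a : ℕ) : ℝ) ^ p)⁻¹ :=
    (Real.summable_nat_rpow_inv.mpr (lt_add_of_pos_right 1 (by positivity))).comp_injective
      PNat.coe_injective
  refine (summable_pi_prod (fun a => by positivity) hf (d + 1)).of_nonneg_of_le
    (chainMonomial_nonneg u) fun n => ?_
  have hn : ∀ j, (0 : ℝ) < ((n j : ℕ) : ℝ) := fun j => by exact_mod_cast (n j).pos
  calc chainMonomial u n = 1 / ∏ j, partialSum n j ^ u j := by
        simp [chainMonomial]
    _ ≤ 1 / ((∏ j, ((n j : ℕ) : ℝ)) * ∑ j, ((n j : ℕ) : ℝ)) :=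
        one_div_le_one_div_of_le (by positivity) (prod_mul_sum_le_prod_partialSum_pow hu hlast n)
    _ ≤ 1 / ∏ j, ((n j : ℕ) : ℝ) ^ p :=
        one_div_le_one_div_of_le (prod_pos fun j _ => by have := hn j; positivity)
          (prod_rpow_one_add_inv_card_le_prod_mul_sum fun j => (hn j).le)
    _ = ∏ j, (((n j : ℕ) : ℝ) ^ p)⁻¹ := by simp [prod_inv_distrib]

theorem hasSum_chainMonomial_comp_perm (τ : Equiv.Perm (Fin (d + 1))) {u : Fin (d + 1) → ℕ}
    (hu : ∀ j, 1 ≤ u j) (hlast : 2 ≤ u (Fin.last d)) :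
    HasSum (fun n => chainMonomial u (n ∘ τ)) (multipleZeta (d + 1) u) := by
  rw [multipleZeta_eq_tsum_chainMonomial]
  exact ((Equiv.arrowCongr τ.symm (Equiv.refl ℕ+)).hasSum_iff.mpr
    (summable_chainMonomial hu hlast).hasSum :)

theorem chainMonomial_mul_one_div_sum_pow (u : Fin (d + 1) → ℕ) (n : Fin (d + 1) → ℕ+)
    (s : ℕ) :
    chainMonomial u n * (1 / (∑ l, ((n l : ℕ) : ℝ)) ^ s) =
      chainMonomial (Fin.snoc (u ∘ Fin.castSucc) (u (Fin.last d) + s)) n := by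
  rw [chainMonomial_succ, chainMonomial_succ]
  simp only [Function.comp_def, one_div, Fin.snoc_castSucc, Fin.snoc_last, pow_add, mul_inv_rev]
  ring

def mzvSpan (d w : ℕ) : Submodule ℤ ℝ :=
  Submodule.span ℤ (multipleZeta d '' {t | (∀ j, 1 ≤ t j) ∧ ∑ j, t j = w})

theorem summable_mul_one_div_sum_pow_and_tsum_mem_mzvSpan {s : ℕ} (hs : 2 ≤ s)
    {F : (Fin (d + 1) → ℕ+) → ℝ} (hF : F ∈ chainSpan (d + 1) w) :
    Summable (fun n => F n * (1 / (∑ l, ((n l : ℕ) : ℝ)) ^ s)) ∧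
      ∑' n, F n * (1 / (∑ l, ((n l : ℕ) : ℝ)) ^ s) ∈ mzvSpan (d + 1) (w + s) := by
  induction hF using Submodule.span_induction with
  | mem F hF =>
    obtain ⟨τ, u, hu, rfl, rfl⟩ := hF
    set u' := Fin.snoc (α := fun _ => ℕ) (u ∘ Fin.castSucc) (u (Fin.last d) + s)
    have hlast : 2 ≤ u' (Fin.last d) := by simp only [Fin.snoc_last, u']; omega
    have hu' : ∀ j, 1 ≤ u' j :=
      Fin.lastCases (by omega) (by simpa [u'] using fun j => hu _)
    have hw : ∑ j, u' j = ∑ j, u j + s := by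
      simp only [Fin.sum_univ_castSucc, Fin.snoc_castSucc, Function.comp_apply, Fin.snoc_last, u']
      ring
    have heq : (fun n => chainMonomial u (n ∘ τ) * (1 / (∑ l, ((n l : ℕ) : ℝ)) ^ s)) =
        fun n => chainMonomial u' (n ∘ τ) := by
      funext n
      rw [← Equiv.sum_comp τ fun l => ((n l : ℕ) : ℝ)]
      exact chainMonomial_mul_one_div_sum_pow u (n ∘ τ) s
    have hsum := hasSum_chainMonomial_comp_perm τ hu' hlast
    rw [heq]
    exact ⟨hsum.summable, hsum.tsum_eq ▸ Submodule.subset_span ⟨u', ⟨hu', hw⟩, rfl⟩⟩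
  | zero => simp
  | add F G _ _ hF hG =>
    simp only [Pi.add_apply, add_mul]
    exact ⟨hF.1.add hG.1, (hF.1.tsum_add hG.1).symm ▸ add_mem hF.2 hG.2⟩
  | smul c F _ hF =>
    simp only [Pi.smul_apply, smul_mul_assoc]
    exact ⟨hF.1.const_smul c, (hF.1.tsum_const_smul c).symm ▸ (mzvSpan _ _).smul_mem c hF.2⟩

theorem mordellTornheim_isZLinearComb_mzv_general (d : ℕ)
    (σ : Fin d → ℕ) (hσ : ∀ i, 1 ≤ σ i) (s : ℕ) (hs : 2 ≤ s) :
    Summable (fun n : Fin d → ℕ+ =>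
      1 / ((∏ i, (((n i : ℕ)) : ℝ) ^ (σ i)) * (∑ i, (((n i : ℕ)) : ℝ)) ^ s)) ∧
    ∃ (T : Finset (Fin d → ℕ)) (c : (Fin d → ℕ) → ℤ),
      (∀ t ∈ T, (∀ j, 1 ≤ t j) ∧ (∑ j, t j) = (∑ i, σ i) + s) ∧
      (∑' n : Fin d → ℕ+,
          1 / ((∏ i, (((n i : ℕ)) : ℝ) ^ (σ i)) * (∑ i, (((n i : ℕ)) : ℝ)) ^ s)) =
        ∑ t ∈ T, (c t : ℝ) * multipleZeta d t := by
  rcases d with _ | d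
  · simp only [univ_eq_empty, prod_empty, sum_empty, zero_pow (by omega : s ≠ 0), mul_zero,
      div_zero, summable_zero, tsum_zero, true_and]
    exact ⟨∅, 0, by simp, by simp⟩
  have hsummand : (fun n : Fin (d + 1) → ℕ+ =>
      1 / ((∏ i, (((n i : ℕ)) : ℝ) ^ (σ i)) * (∑ i, (((n i : ℕ)) : ℝ)) ^ s)) =
      fun n => (∏ i, 1 / ((n i : ℕ) : ℝ) ^ σ i) * (1 / (∑ l, ((n l : ℕ) : ℝ)) ^ s) := by
    funext n
    simp [mul_comm]
  obtain ⟨hsum, hmem⟩ := summable_mul_one_div_sum_pow_and_tsum_mem_mzvSpan hs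
    (prod_one_div_pow_mem_chainSpan σ hσ)
  obtain ⟨c, hc, hcomb⟩ := (Finsupp.mem_span_image_iff_linearCombination ℤ).mp hmem
  rw [hsummand]
  refine ⟨hsum, c.support, c, fun t ht => hc ht, ?_⟩
  rw [← hcomb, Finsupp.linearCombination_apply, Finsupp.sum]
  simp [zsmul_eq_mul]

/-- Theorem 4.1 for a single internal vertex (Bradley–Zhou with `ℤ` coefficients):
the Mordell–Tornheim sum `T(σ₁, …, σ_d ; s)` converges and is a finite `ℤ`-linear
combination of multiple zeta values of depth `d` and weight `σ₁ + ⋯ + σ_d + s`. -/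
theorem mordellTornheim_isZLinearComb_mzv (d : ℕ) (hd : 1 ≤ d)
    (σ : Fin d → ℕ) (hσ : ∀ i, 1 ≤ σ i) (s : ℕ) (hs : 2 ≤ s) :
    Summable (fun n : Fin d → ℕ+ =>
      1 / ((∏ i, (((n i : ℕ)) : ℝ) ^ (σ i)) * (∑ i, (((n i : ℕ)) : ℝ)) ^ s)) ∧
    ∃ (T : Finset (Fin d → ℕ)) (c : (Fin d → ℕ) → ℤ),
      (∀ t ∈ T, (∀ j, 1 ≤ t j) ∧ (∑ j, t j) = (∑ i, σ i) + s) ∧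
      (∑' n : Fin d → ℕ+,
          1 / ((∏ i, (((n i : ℕ)) : ℝ) ^ (σ i)) * (∑ i, (((n i : ℕ)) : ℝ)) ^ s)) =
        ∑ t ∈ T, (c t : ℝ) * multipleZeta d t :=
  mordellTornheim_isZLinearComb_mzv_general d σ hσ s hs
end

section
/- Let $\sigma_1, \sigma_2, \sigma_3$ be positive integers with $\sigma_3 \geq 2$, and let $x_1, x_2, x_3 \in \frac{1}{N}\mathbb{Z}/\mathbb{Z}$. Then the twisted Mordell–Tornheim sum $\sum_{n_1, n_2 \geq 1} \frac{e^{2\pi i (n_1 x_1 + n_2 x_2 - (n_1+n_2) x_3)}}{n_1^{\sigma_1} n_2^{\sigma_2} (n_1+n_2)^{\sigma_3}}$ is a finite $\mathbb{Z}$-linear combination of values $\mathrm{Li}_{s, r+\sigma_3}(z_1, z_2)$ of double polylogarithms at $N$-th roots of unity $z_1 = e^{2\pi i(x_1 - x_2)}$, $z_2 = e^{2\pi i (x_2 - x_3)}$, with $r + s = \sigma_1 + \sigma_2$, $r,s \geq 1$; explicitly it equals $\sum_{r+s=\sigma_1+\sigma_2} \binom{\sigma_1-1}{r-1} \mathrm{Li}_{s,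 r+\sigma_3}(z_1, z_2) + \binom{\sigma_2-1}{r-1} \mathrm{Li}_{s, r+\sigma_3}(z_1^{-1}, z_1 z_2)$. -/
/-- The double polylogarithm `Li_{a,b}(w₁, w₂) = ∑_{0 < m < n} w₁^m w₂^n / (m^a n^b)`,
parametrized by `m = p.1`, `n = p.1 + p.2`. -/
noncomputable def doublePolylog (a b : ℕ) (w₁ w₂ : ℂ) : ℂ :=
  ∑' p : ℕ+ × ℕ+,
    w₁ ^ ((p.1 : ℕ)) * w₂ ^ ((p.1 : ℕ) + (p.2 : ℕ)) /
      ((((p.1 : ℕ)) : ℂ) ^ a * ((((p.1 : ℕ) + (p.2 : ℕ) : ℕ)) : ℂ) ^ b)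

/-!
Eisenstein's trick. With `u = 1/n₁`, `v = 1/n₂`, `w = 1/(n₁ + n₂)` one has `u v = w (u + v)`;
iterating this relation writes `u^σ₁ v^σ₂` as a combination of the monomials `u^s w^r` and
`v^s w^r` with `r + s = σ₁ + σ₂`, the coefficients obeying Pascal's rule. After multiplying by
`w^σ₃` and writing the character as `z₁^n₁ z₂^(n₁+n₂)`, the `u`-terms are the summands of
`Li_{s,r+σ₃}(z₁, z₂)` and the `v`-terms, after swapping `n₁` and `n₂`, those of
`Li_{s,r+σ₃}(z₁⁻¹, z₁ z₂)`. Since `r ≥ 1` and `σ₃ ≥ 2` all these series converge absolutely,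
so the sum may be split term by term.
-/

open Finset

section Eisenstein

variable {R : Type*} [CommRing R]

def eisensteinSum (u w : R) (p q : ℕ) : R :=
  ∑ i ∈ range (p + q + 1), (i.choose q : R) * u ^ (p + q + 1 - i) * w ^ (i + 1)

theorem eisensteinSum_zero_left (u w : R) (q : ℕ) : eisensteinSum u w 0 q = u * w ^ (q + 1) := by
  rw [eisensteinSum, zero_add, sum_eq_single_of_mem q (self_mem_range_succ q)]
  · simp [pow_one]
  · intro i hi hiq
    rw [Nat.choose_eq_zero_of_lt (by grind), Nat.cast_zero, zero_mul, zero_mul]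

theorem eisensteinSum_succ_zero (u w : R) (p : ℕ) :
    eisensteinSum u w (p + 1) 0 = u * eisensteinSum u w p 0 + u * w ^ (p + 2) := by
  simp only [eisensteinSum, Nat.choose_zero_right, Nat.cast_one, one_mul, add_zero]
  rw [sum_range_succ, mul_sum, Nat.add_sub_cancel_left]
  congr 1
  · refine sum_congr rfl fun i _ => ?_
    rw [show p + 1 + 1 - i = (p + 1 - i) + 1 by grind]
    ring
  · ring

theorem eisensteinSum_succ_succ (u w : R) (p q : ℕ) :
    eisensteinSum u w (p + 1) (q + 1) =
      w * (eisensteinSum u w p (q + 1) + eisensteinSum u w (p + 1) q) := by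
  rw [eisensteinSum, eisensteinSum, eisensteinSum, show p + (q + 1) + 1 = p + q + 2 by ring,
    show p + 1 + q + 1 = p + q + 2 by ring, ← sum_add_distrib, mul_sum,
    show p + 1 + (q + 1) + 1 = p + q + 2 + 1 by ring, sum_range_succ']
  simp only [Nat.choose_succ_succ', Nat.choose_zero_succ, Nat.cast_zero, zero_mul, add_zero,
    Nat.cast_add]
  refine sum_congr rfl fun i _ => ?_
  rw [show p + q + 2 + 1 - (i + 1) = p + q + 2 - i by omega]
  ring

theorem mul_pow_eq_eisensteinSum {u v w : R} (h : u * v = w * (u + v)) (q : ℕ) :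
    u * v ^ (q + 1) = eisensteinSum u w 0 q + eisensteinSum v w q 0 := by
  induction q with
  | zero => simp [eisensteinSum, h, mul_add]; ring
  | succ q ih =>
    rw [eisensteinSum_zero_left, eisensteinSum_succ_zero, pow_succ, ← mul_assoc, ih,
      eisensteinSum_zero_left]
    linear_combination w ^ (q + 1) * h

theorem pow_mul_pow_eq_eisensteinSum {u v w : R} (h : u * v = w * (u + v)) (p q : ℕ) :
    u ^ (p + 1) * v ^ (q + 1) = eisensteinSum u w p q + eisensteinSum v w q p := by
  induction p generalizing q with
  | zero => rw [zero_add, pow_one, mul_pow_eq_eisensteinSum h]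
  | succ p ihp =>
    induction q with
    | zero =>
      have hvu : v * u = w * (v + u) := by rw [mul_comm, add_comm, h]
      linear_combination mul_pow_eq_eisensteinSum hvu (p + 1)
    | succ q ihq =>
      rw [eisensteinSum_succ_succ, eisensteinSum_succ_succ]
      linear_combination u ^ (p + 1) * v ^ (q + 1) * h + w * ihp (q + 1) + w * ihq

theorem pow_mul_pow_eq_sum_Icc {u v w : R} (h : u * v = w * (u + v)) {a b : ℕ} (ha : 1 ≤ a)
    (hb : 1 ≤ b) :
    u ^ a * v ^ b = ∑ r ∈ Icc 1 (a + b - 1),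
      (((r - 1).choose (b - 1) : R) * u ^ (a + b - r) +
        ((r - 1).choose (a - 1) : R) * v ^ (a + b - r)) * w ^ r := by
  obtain ⟨p, rfl⟩ := Nat.exists_eq_add_of_le' ha
  obtain ⟨q, rfl⟩ := Nat.exists_eq_add_of_le' hb
  rw [pow_mul_pow_eq_eisensteinSum h, eisensteinSum, eisensteinSum, add_comm q p,
    ← sum_add_distrib, show p + 1 + (q + 1) - 1 = p + q + 1 by omega,
    ← Ico_add_one_right_eq_Icc, sum_Ico_eq_sum_range, Nat.add_sub_cancel]
  refine sum_congr rfl fun i _ => ?_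
  rw [Nat.add_sub_cancel, Nat.add_sub_cancel, Nat.add_sub_cancel_left,
    show p + 1 + (q + 1) - (1 + i) = p + q + 1 - i by omega, add_comm 1 i]
  ring

end Eisenstein

noncomputable def doublePolylogTerm (a b : ℕ) (w₁ w₂ : ℂ) (p : ℕ+ × ℕ+) : ℂ :=
  w₁ ^ ((p.1 : ℕ)) * w₂ ^ ((p.1 : ℕ) + (p.2 : ℕ)) /
    ((((p.1 : ℕ)) : ℂ) ^ a * ((((p.1 : ℕ) + (p.2 : ℕ) : ℕ)) : ℂ) ^ b)

theorem doublePolylog_eq_tsum (a b : ℕ) (w₁ w₂ : ℂ) :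
    doublePolylog a b w₁ w₂ = ∑' p, doublePolylogTerm a b w₁ w₂ p := rfl

theorem sq_mul_sq_le_pow_mul_add_pow {a b m : ℕ} (ha : 1 ≤ a) (hb : 3 ≤ b) (hm : 0 < m) (k : ℕ) :
    m ^ 2 * k ^ 2 ≤ m ^ a * (m + k) ^ b :=
  calc m ^ 2 * k ^ 2 = m * (m * k ^ 2) := by ring
    _ ≤ m ^ a * ((m + k) * (m + k) ^ 2) :=
      Nat.mul_le_mul (Nat.le_self_pow (by omega) m)
        (Nat.mul_le_mul (Nat.le_add_right m k) (Nat.pow_le_pow_left (Nat.le_add_left k m) 2))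
    _ ≤ m ^ a * (m + k) ^ b := by
      rw [← pow_succ']
      exact Nat.mul_le_mul_left _ (Nat.pow_le_pow_right (by omega) hb)

theorem summable_doublePolylogTerm {a b : ℕ} (ha : 1 ≤ a) (hb : 3 ≤ b) {w₁ w₂ : ℂ}
    (h₁ : ‖w₁‖ ≤ 1) (h₂ : ‖w₂‖ ≤ 1) : Summable (doublePolylogTerm a b w₁ w₂) := by
  have hsq : Summable fun n : ℕ+ => ((n : ℝ) ^ 2)⁻¹ :=
    (Real.summable_nat_pow_inv.mpr one_lt_two).comp_injective PNat.coe_injective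
  refine .of_norm_bounded (hsq.mul_of_nonneg hsq (fun _ => by positivity) fun _ => by positivity)
    fun ⟨m, k⟩ => ?_
  calc ‖doublePolylogTerm a b w₁ w₂ (m, k)‖
      ≤ 1 / ((m : ℕ) ^ a * ((m : ℕ) + (k : ℕ) : ℕ) ^ b : ℝ) := by
        rw [doublePolylogTerm, norm_div, norm_mul, norm_mul, norm_pow, norm_pow, norm_pow,
          norm_pow, Complex.norm_natCast, Complex.norm_natCast]
        gcongr
        exact mul_le_one₀ (pow_le_one₀ (norm_nonneg _) h₁) (by positivity)
          (pow_le_one₀ (norm_nonneg _) h₂)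
    _ ≤ ((m : ℝ) ^ 2)⁻¹ * ((k : ℝ) ^ 2)⁻¹ := by
        rw [one_div, ← mul_inv]
        exact inv_anti₀ (by positivity)
          (by exact_mod_cast sq_mul_sq_le_pow_mul_add_pow ha hb m.pos k)

theorem div_eq_sum_doublePolylogTerm {σ₁ σ₂ : ℕ} (h₁ : 1 ≤ σ₁) (h₂ : 1 ≤ σ₂) (σ₃ : ℕ) {z₁ : ℂ}
    (hz : z₁ ≠ 0) (z₂ : ℂ) (p : ℕ+ × ℕ+) :
    z₁ ^ (p.1 : ℕ) * z₂ ^ ((p.1 : ℕ) + (p.2 : ℕ)) /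
        (((p.1 : ℕ) : ℂ) ^ σ₁ * ((p.2 : ℕ) : ℂ) ^ σ₂ * (((p.1 : ℕ) : ℂ) + ((p.2 : ℕ) : ℂ)) ^ σ₃) =
      ∑ r ∈ Icc 1 (σ₁ + σ₂ - 1),
        (((r - 1).choose (σ₂ - 1) : ℂ) * doublePolylogTerm (σ₁ + σ₂ - r) (r + σ₃) z₁ z₂ p +
          ((r - 1).choose (σ₁ - 1) : ℂ) *
            doublePolylogTerm (σ₁ + σ₂ - r) (r + σ₃) z₁⁻¹ (z₁ * z₂) p.swap) := by
  obtain ⟨m, k⟩ := p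
  have hxy : ((m : ℕ) : ℂ) + ((k : ℕ) : ℂ) ≠ 0 := by
    rw [← Nat.cast_add]; exact Nat.cast_ne_zero.mpr (by positivity)
  set x : ℂ := ((m : ℕ) : ℂ)
  set y : ℂ := ((k : ℕ) : ℂ)
  have hx : x ≠ 0 := Nat.cast_ne_zero.mpr m.ne_zero
  have hy : y ≠ 0 := Nat.cast_ne_zero.mpr k.ne_zero
  have hpartial : x⁻¹ * y⁻¹ = (x + y)⁻¹ * (x⁻¹ + y⁻¹) := by field_simp; ring
  have hswap : z₁⁻¹ ^ (k : ℕ) * (z₁ * z₂) ^ ((k : ℕ) + (m : ℕ)) =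
      z₁ ^ (m : ℕ) * z₂ ^ ((m : ℕ) + (k : ℕ)) := by
    rw [mul_pow, add_comm (k : ℕ), pow_add z₁, inv_pow]
    field_simp
  calc _ = z₁ ^ (m : ℕ) * z₂ ^ ((m : ℕ) + (k : ℕ)) * (x⁻¹ ^ σ₁ * y⁻¹ ^ σ₂) * (x + y)⁻¹ ^ σ₃ := by
        ring
    _ = _ := by
      rw [pow_mul_pow_eq_sum_Icc hpartial h₁ h₂, mul_sum, sum_mul]
      refine sum_congr rfl fun r _ => ?_
      simp only [doublePolylogTerm, Prod.swap_prod_mk, hswap, Nat.cast_add]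
      ring

open Complex Real in
theorem cexp_two_pi_I_mul_eq_pow_mul_pow (x₁ x₂ x₃ : ℂ) (m k : ℕ) :
    cexp (2 * π * I * ((m : ℂ) * x₁ + (k : ℂ) * x₂ - ((m : ℂ) + (k : ℂ)) * x₃)) =
      cexp (2 * π * I * (x₁ - x₂)) ^ m * cexp (2 * π * I * (x₂ - x₃)) ^ (m + k) := by
  rw [← Complex.exp_nat_mul, ← Complex.exp_nat_mul, ← Complex.exp_add]
  push_cast
  ring_nf

open Complex Real in
theorem norm_cexp_two_pi_I_mul_ofReal (t : ℝ) : ‖cexp (2 * π * I * t)‖ = 1 := by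
  rw [show 2 * π * I * t = ((2 * π * t : ℝ) : ℂ) * I by push_cast; ring, norm_exp_ofReal_mul_I]

theorem twisted_mordellTornheim_eq_polylog_comb_general
    (σ₁ σ₂ σ₃ : ℕ) (h1 : 1 ≤ σ₁) (h2 : 1 ≤ σ₂) (h3 : 2 ≤ σ₃)
    (x₁ x₂ x₃ : ℝ) :
    (∑' n : ℕ+ × ℕ+,
        Complex.exp (2 * Real.pi * Complex.I *
            (((n.1 : ℕ) : ℂ) * (x₁ : ℂ) + ((n.2 : ℕ) : ℂ) * (x₂ : ℂ) -
              (((n.1 : ℕ) : ℂ) + ((n.2 : ℕ) : ℂ)) * (x₃ : ℂ))) /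
          (((n.1 : ℕ) : ℂ) ^ σ₁ * ((n.2 : ℕ) : ℂ) ^ σ₂ *
            (((n.1 : ℕ) : ℂ) + ((n.2 : ℕ) : ℂ)) ^ σ₃)) =
      ∑ r ∈ Finset.Icc 1 (σ₁ + σ₂ - 1),
        ((Nat.choose (r - 1) (σ₂ - 1) : ℂ) *
            doublePolylog (σ₁ + σ₂ - r) (r + σ₃)
              (Complex.exp (2 * Real.pi * Complex.I * ((x₁ : ℂ) - (x₂ : ℂ))))
              (Complex.exp (2 * Real.pi * Complex.I * ((x₂ : ℂ) - (x₃ : ℂ)))) +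
          (Nat.choose (r - 1) (σ₁ - 1) : ℂ) *
            doublePolylog (σ₁ + σ₂ - r) (r + σ₃)
              (Complex.exp (2 * Real.pi * Complex.I * ((x₁ : ℂ) - (x₂ : ℂ))))⁻¹
              (Complex.exp (2 * Real.pi * Complex.I * ((x₁ : ℂ) - (x₂ : ℂ))) *
                Complex.exp (2 * Real.pi * Complex.I * ((x₂ : ℂ) - (x₃ : ℂ))))) := by
  have hz₁ := norm_cexp_two_pi_I_mul_ofReal (x₁ - x₂)
  have hz₂ := norm_cexp_two_pi_I_mul_ofReal (x₂ - x₃)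
  push_cast at hz₁ hz₂
  simp_rw [cexp_two_pi_I_mul_eq_pow_mul_pow]
  set z₁ := Complex.exp (2 * Real.pi * Complex.I * ((x₁ : ℂ) - (x₂ : ℂ)))
  set z₂ := Complex.exp (2 * Real.pi * Complex.I * ((x₂ : ℂ) - (x₃ : ℂ)))
  have hz₁0 : z₁ ≠ 0 := Complex.exp_ne_zero _
  have hexponents : ∀ r ∈ Icc 1 (σ₁ + σ₂ - 1), 1 ≤ σ₁ + σ₂ - r ∧ 3 ≤ r + σ₃ := fun r hr => by
    rw [mem_Icc] at hr; omega
  have hsum₁ : ∀ r ∈ Icc 1 (σ₁ + σ₂ - 1),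
      Summable (doublePolylogTerm (σ₁ + σ₂ - r) (r + σ₃) z₁ z₂) := fun r hr =>
    summable_doublePolylogTerm (hexponents r hr).1 (hexponents r hr).2 hz₁.le hz₂.le
  have hsum₂ : ∀ r ∈ Icc 1 (σ₁ + σ₂ - 1),
      Summable fun n : ℕ+ × ℕ+ =>
        doublePolylogTerm (σ₁ + σ₂ - r) (r + σ₃) z₁⁻¹ (z₁ * z₂) n.swap :=
    fun r hr => (Equiv.prodComm ℕ+ ℕ+).summable_iff.mpr <|
      summable_doublePolylogTerm (hexponents r hr).1 (hexponents r hr).2 (by simp [hz₁])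
        (by simp [hz₁, hz₂])
  rw [tsum_congr (div_eq_sum_doublePolylogTerm h1 h2 σ₃ hz₁0 z₂),
    Summable.tsum_finsetSum fun r hr => ((hsum₁ r hr).mul_left _).add ((hsum₂ r hr).mul_left _)]
  refine sum_congr rfl fun r hr => ?_
  rw [((hsum₁ r hr).mul_left _).tsum_add ((hsum₂ r hr).mul_left _), tsum_mul_left, tsum_mul_left,
    doublePolylog_eq_tsum, doublePolylog_eq_tsum,
    ← (Equiv.prodComm ℕ+ ℕ+).tsum_eq (doublePolylogTerm _ _ z₁⁻¹ (z₁ * z₂))]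
  rfl

/-- Theorem 4.2 for the trivalent tree with one internal vertex: for torsion points
`x₁, x₂, x₃ ∈ (1/N)ℤ/ℤ`, the twisted Mordell–Tornheim sum
`∑_{n₁,n₂ ≥ 1} e^{2πi(n₁x₁+n₂x₂-(n₁+n₂)x₃)} / (n₁^σ₁ n₂^σ₂ (n₁+n₂)^σ₃)` is the
`ℤ`-linear combination of double polylogarithms at `N`-th roots of unity
`z₁ = e^{2πi(x₁-x₂)}`, `z₂ = e^{2πi(x₂-x₃)}` given by Eisenstein's trick:
`∑_{r+s=σ₁+σ₂} C(r-1,σ₂-1) Li_{s,r+σ₃}(z₁, z₂) + C(r-1,σ₁-1) Li_{s,r+σ₃}(z₁⁻¹, z₁z₂)`. -/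
theorem twisted_mordellTornheim_eq_polylog_comb (N : ℕ) (hN : 1 ≤ N)
    (σ₁ σ₂ σ₃ : ℕ) (h1 : 1 ≤ σ₁) (h2 : 1 ≤ σ₂) (h3 : 2 ≤ σ₃)
    (x₁ x₂ x₃ : ℝ)
    (hx₁ : ∃ a : ℤ, x₁ = (a : ℝ) / N) (hx₂ : ∃ a : ℤ, x₂ = (a : ℝ) / N)
    (hx₃ : ∃ a : ℤ, x₃ = (a : ℝ) / N) :
    (∑' n : ℕ+ × ℕ+,
        Complex.exp (2 * Real.pi * Complex.I *
            (((n.1 : ℕ) : ℂ) * (x₁ : ℂ) + ((n.2 : ℕ) : ℂ) * (x₂ : ℂ) -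
              (((n.1 : ℕ) : ℂ) + ((n.2 : ℕ) : ℂ)) * (x₃ : ℂ))) /
          (((n.1 : ℕ) : ℂ) ^ σ₁ * ((n.2 : ℕ) : ℂ) ^ σ₂ *
            (((n.1 : ℕ) : ℂ) + ((n.2 : ℕ) : ℂ)) ^ σ₃)) =
      ∑ r ∈ Finset.Icc 1 (σ₁ + σ₂ - 1),
        ((Nat.choose (r - 1) (σ₂ - 1) : ℂ) *
            doublePolylog (σ₁ + σ₂ - r) (r + σ₃)
              (Complex.exp (2 * Real.pi * Complex.I * ((x₁ : ℂ) - (x₂ : ℂ))))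
              (Complex.exp (2 * Real.pi * Complex.I * ((x₂ : ℂ) - (x₃ : ℂ)))) +
          (Nat.choose (r - 1) (σ₁ - 1) : ℂ) *
            doublePolylog (σ₁ + σ₂ - r) (r + σ₃)
              (Complex.exp (2 * Real.pi * Complex.I * ((x₁ : ℂ) - (x₂ : ℂ))))⁻¹
              (Complex.exp (2 * Real.pi * Complex.I * ((x₁ : ℂ) - (x₂ : ℂ))) *
                Complex.exp (2 * Real.pi * Complex.I * ((x₂ : ℂ) - (x₃ : ℂ))))) :=
  twisted_mordellTornheim_eq_polylog_comb_general σ₁ σ₂ σ₃ h1 h2 h3 x₁ x₂ x₃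
end
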